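/- arXiv:2509.03657 — 6 statements merged into one kernel-verified Lean document; each statement's English description precedes it below -/
import Mathlib

section
/- For every nonzero ideal 𝔞 of 𝒪_K there exists a generator a of 𝔞, unique up to sign, such that ε^{-1}|σ₂(a)| < |σ₁(a)| ≤ ε|σ₂(a)|. Moreover, for this generator one has ε^{-1/2}𝒩(𝔞)^{1/2} ≤ |σᵢ(a)| ≤ ε^{1/2}𝒩(𝔞)^{1/2} for i = 1, 2. -/
/-!
For a unit `u` of a real quadratic field, `|σ₁ u| |σ₂ u| = |N u| = 1`, so multiplying a number by
`±εⁿ` multiplies the ratio `|σ₁ a| / |σ₂ a|` by `(σ₁ ε)^(2n)`. The generators of `𝔞 = (a₀)` are the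
`±a₀ εⁿ`, hence exactly one pair `±a` of them has its ratio in the fundamental interval
`(ε⁻¹, ε]` of multiplication by `ε²`. For it, `|σ₁ a| |σ₂ a| = 𝒩(𝔞)` with the two factors within a
factor `ε` of each other, which forces both to lie between `ε^(∓1/2) 𝒩(𝔞)^(1/2)`.
-/

open NumberField Ideal Set

theorem existsUnique_mul_zpow_mem_Ioc {c r a : ℝ} (hc : 1 < c) (hr : 0 < r) (ha : 0 < a) :
    ∃! n : ℤ, r * c ^ n ∈ Ioc a (a * c) := by
  have hc₀ : 0 < c := by linarith
  have hlog : ∀ n : ℤ, r * c ^ n ∈ Ioc a (a * c) ↔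
      Real.log r + n • Real.log c ∈ Ioc (Real.log a) (Real.log a + Real.log c) := by
    intro n
    rw [zsmul_eq_mul, ← Real.log_zpow, ← Real.log_mul hr.ne' (by positivity),
      ← Real.log_mul ha.ne' hc₀.ne', mem_Ioc, mem_Ioc,
      Real.log_lt_log_iff ha (by positivity), Real.log_le_log_iff (by positivity) (by positivity)]
  simpa only [hlog] using existsUnique_add_zsmul_mem_Ioc (Real.log_pos hc) (Real.log r) (Real.log a)

theorem mul_eq_norm_of_finrank_eq_two {K : Type*} [Field K] [NumberField K]
    (hdeg : Module.finrank ℚ K = 2) {σ₁ σ₂ : K →+* ℝ} (hσ : σ₁ ≠ σ₂) (x : K) :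
    σ₁ x * σ₂ x = Algebra.norm ℚ x := by
  classical
  let τ : (K →+* ℝ) → (K →ₐ[ℚ] ℂ) := fun σ => (Complex.ofRealHom.comp σ).toRatAlgHom
  have hτ : τ σ₁ ≠ τ σ₂ := fun h => hσ <| RingHom.ext fun y =>
    Complex.ofReal_injective (DFunLike.congr_fun h y)
  have huniv : Finset.univ = {τ σ₁, τ σ₂} :=
    (Finset.eq_univ_of_card _ (by rw [Finset.card_pair hτ, AlgHom.card, hdeg])).symm
  have h := Algebra.norm_eq_prod_embeddings ℚ ℂ x
  rw [huniv, Finset.prod_pair hτ] at h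
  simp only [τ, RingHom.toRatAlgHom_apply, RingHom.comp_apply, Complex.ofRealHom_eq_coe,
    eq_ratCast] at h
  exact_mod_cast h.symm

theorem abs_mul_abs_eq_absNorm_span {K : Type*} [Field K] [NumberField K]
    (hdeg : Module.finrank ℚ K = 2) {σ₁ σ₂ : K →+* ℝ} (hσ : σ₁ ≠ σ₂) (x : 𝓞 K) :
    |σ₁ x| * |σ₂ x| = absNorm (span {x}) := by
  rw [← abs_mul, mul_eq_norm_of_finrank_eq_two hdeg hσ, absNorm_span_singleton,
    ← Algebra.coe_norm_int, Nat.cast_natAbs, Int.cast_abs, Rat.cast_intCast]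

theorem abs_mul_abs_units_eq_one {K : Type*} [Field K] [NumberField K]
    (hdeg : Module.finrank ℚ K = 2) {σ₁ σ₂ : K →+* ℝ} (hσ : σ₁ ≠ σ₂) (u : (𝓞 K)ˣ) :
    |σ₁ u| * |σ₂ u| = 1 := by
  rw [abs_mul_abs_eq_absNorm_span hdeg hσ, span_singleton_eq_top.mpr u.isUnit, absNorm_top,
    Nat.cast_one]

theorem map_units_zpow {M G : Type*} [Monoid M] [DivisionMonoid G] (f : M →* G) (u : Mˣ)
    (n : ℤ) :
    f ↑(u ^ n) = f u ^ n := by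
  simpa only [Units.coe_map, Units.val_zpow_eq_zpow_val] using
    congrArg Units.val (map_zpow (Units.map f) u n)

section absRatio

variable {R : Type*} [Semiring R] (σ₁ σ₂ : R →+* ℝ)

noncomputable def absRatio : R →*₀ ℝ where
  toFun x := |σ₁ x| / |σ₂ x|
  map_zero' := by simp
  map_one' := by simp
  map_mul' x y := by simp only [map_mul, abs_mul, mul_div_mul_comm]

variable {σ₁ σ₂}

theorem absRatio_apply (x : R) : absRatio σ₁ σ₂ x = |σ₁ x| / |σ₂ x| := rfl

theorem absRatio_mem_Ioc_iff {x : R} (hx : σ₂ x ≠ 0) (a b : ℝ) :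
    absRatio σ₁ σ₂ x ∈ Ioc a b ↔ a * |σ₂ x| < |σ₁ x| ∧ |σ₁ x| ≤ b * |σ₂ x| := by
  rw [absRatio_apply, mem_Ioc, lt_div_iff₀ (abs_pos.mpr hx), div_le_iff₀ (abs_pos.mpr hx)]

end absRatio

theorem absRatio_neg {R : Type*} [Ring R] {σ₁ σ₂ : R →+* ℝ} (x : R) :
    absRatio σ₁ σ₂ (-x) = absRatio σ₁ σ₂ x := by
  simp only [absRatio_apply, map_neg, abs_neg]

section FundamentalUnit

variable {K : Type*} [Field K] [NumberField K] {σ₁ σ₂ : K →+* ℝ} {ε : (𝓞 K)ˣ}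

theorem absRatio_units_zpow (hdeg : Module.finrank ℚ K = 2) (hσ : σ₁ ≠ σ₂)
    (hε : 0 < σ₁ (ε : K)) (n : ℤ) :
    absRatio σ₁ σ₂ ((ε ^ n : (𝓞 K)ˣ) : K) = (σ₁ (ε : K) ^ 2) ^ n := by
  have hε₂ : |σ₂ (ε : K)| = |σ₁ (ε : K)|⁻¹ :=
    eq_inv_of_mul_eq_one_right (abs_mul_abs_units_eq_one hdeg hσ ε)
  have hratio : absRatio σ₁ σ₂ (ε : K) = σ₁ (ε : K) ^ 2 := by
    rw [absRatio_apply, hε₂, abs_of_pos hε, div_inv_eq_mul, sq]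
  rw [← hratio]
  exact map_units_zpow ((absRatio σ₁ σ₂).toMonoidHom.comp (algebraMap (𝓞 K) K).toMonoidHom) ε n

theorem exists_associated_absRatio_mem_Ioc_unique_up_to_sign (hdeg : Module.finrank ℚ K = 2)
    (hσ : σ₁ ≠ σ₂) (hε : 1 < σ₁ (ε : K)) (hεfund : ∀ u : (𝓞 K)ˣ, ∃ n : ℤ, u = ε ^ n ∨ u = -ε ^ n)
    {a₀ : 𝓞 K} (ha₀ : a₀ ≠ 0) :
    ∃ a : 𝓞 K, Associated a₀ a ∧ absRatio σ₁ σ₂ (a : K) ∈ Ioc (σ₁ (ε : K))⁻¹ (σ₁ (ε : K)) ∧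
      ∀ b : 𝓞 K, Associated a₀ b → absRatio σ₁ σ₂ (b : K) ∈ Ioc (σ₁ (ε : K))⁻¹ (σ₁ (ε : K)) →
        b = a ∨ b = -a := by
  set E := σ₁ (ε : K)
  have hE : 0 < E := zero_lt_one.trans hε
  have hr : 0 < absRatio σ₁ σ₂ (a₀ : K) := by
    have ha₀' : (a₀ : K) ≠ 0 := by exact_mod_cast ha₀
    simpa only [absRatio_apply] using
      div_pos (abs_pos.mpr ((map_ne_zero σ₁).mpr ha₀')) (abs_pos.mpr ((map_ne_zero σ₂).mpr ha₀'))
  have hmul : ∀ n : ℤ, absRatio σ₁ σ₂ ((a₀ * ↑(ε ^ n) : 𝓞 K) : K) =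
      absRatio σ₁ σ₂ (a₀ : K) * (E ^ 2) ^ n := by
    intro n
    rw [RingOfIntegers.coe_eq_algebraMap, map_mul, map_mul, ← RingOfIntegers.coe_eq_algebraMap,
      ← RingOfIntegers.coe_eq_algebraMap, absRatio_units_zpow hdeg hσ hE]
  have hIoc : Ioc E⁻¹ E = Ioc E⁻¹ (E⁻¹ * E ^ 2) := by
    rw [sq, inv_mul_cancel_left₀ hE.ne']
  obtain ⟨n, hn, huniq⟩ :=
    existsUnique_mul_zpow_mem_Ioc (one_lt_pow₀ hε two_ne_zero) hr (inv_pos.mpr hE)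
  simp only [hIoc, ← hmul] at hn huniq ⊢
  refine ⟨a₀ * ↑(ε ^ n), ⟨ε ^ n, rfl⟩, hn, ?_⟩
  rintro b ⟨u, rfl⟩ hb
  obtain ⟨m, rfl | rfl⟩ := hεfund u
  · exact .inl (by rw [huniq m hb])
  · refine .inr ?_
    rw [Units.val_neg, mul_neg, neg_inj, huniq m ?_]
    simpa only [Units.val_neg, mul_neg, RingOfIntegers.coe_eq_algebraMap, map_neg, absRatio_neg]
      using hb

end FundamentalUnit

theorem rpow_half_bounds_of_inv_mul_le {E s t : ℝ} (hE : 0 < E) (hs : 0 ≤ s) (ht : 0 ≤ t)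
    (hst : E⁻¹ * t ≤ s) (hts : E⁻¹ * s ≤ t) :
    E ^ (-(1 : ℝ) / 2) * (s * t) ^ ((1 : ℝ) / 2) ≤ s ∧
      s ≤ E ^ ((1 : ℝ) / 2) * (s * t) ^ ((1 : ℝ) / 2) := by
  have hst' : E⁻¹ * (s * t) ≤ s ^ 2 := by nlinarith
  have hts' : s ^ 2 ≤ E * (s * t) := by nlinarith [(inv_mul_le_iff₀ hE).mp hts]
  rw [neg_div, Real.rpow_neg hE.le, ← Real.inv_rpow hE.le, ← Real.mul_rpow (by positivity)
    (by positivity), ← Real.mul_rpow hE.le (by positivity), ← Real.sqrt_eq_rpow,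
    ← Real.sqrt_eq_rpow]
  exact ⟨(Real.sqrt_le_left hs).mpr hst', (Real.le_sqrt hs (by positivity)).mpr hts'⟩

theorem statement0_general
    (K : Type) [Field K] [NumberField K]
    (hdeg : Module.finrank ℚ K = 2)
    (σ₁ σ₂ : K →+* ℝ) (hσ : σ₁ ≠ σ₂)
    (hcl : NumberField.classNumber K = 1)
    (ε : (𝓞 K)ˣ) (hε1 : 1 < σ₁ ((ε : 𝓞 K) : K))
    (hεfund : ∀ u : (𝓞 K)ˣ, ∃ n : ℤ, u = ε ^ n ∨ u = -ε ^ n)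
    (𝔞 : Ideal (𝓞 K)) (h𝔞 : 𝔞 ≠ ⊥) :
    ∃ a : 𝓞 K, Ideal.span {a} = 𝔞 ∧
      (σ₁ ((ε : 𝓞 K) : K))⁻¹ * |σ₂ (a : K)| < |σ₁ (a : K)| ∧
      |σ₁ (a : K)| ≤ σ₁ ((ε : 𝓞 K) : K) * |σ₂ (a : K)| ∧
      (∀ b : 𝓞 K, Ideal.span {b} = 𝔞 →
        (σ₁ ((ε : 𝓞 K) : K))⁻¹ * |σ₂ (b : K)| < |σ₁ (b : K)| →
        |σ₁ (b : K)| ≤ σ₁ ((ε : 𝓞 K) : K) * |σ₂ (b : K)| → b = a ∨ b = -a) ∧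
      ((σ₁ ((ε : 𝓞 K) : K)) ^ (-(1 : ℝ) / 2) * (Ideal.absNorm 𝔞 : ℝ) ^ ((1 : ℝ) / 2) ≤ |σ₁ (a : K)| ∧
        |σ₁ (a : K)| ≤ (σ₁ ((ε : 𝓞 K) : K)) ^ ((1 : ℝ) / 2) * (Ideal.absNorm 𝔞 : ℝ) ^ ((1 : ℝ) / 2)) ∧
      ((σ₁ ((ε : 𝓞 K) : K)) ^ (-(1 : ℝ) / 2) * (Ideal.absNorm 𝔞 : ℝ) ^ ((1 : ℝ) / 2) ≤ |σ₂ (a : K)| ∧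
        |σ₂ (a : K)| ≤ (σ₁ ((ε : 𝓞 K) : K)) ^ ((1 : ℝ) / 2) * (Ideal.absNorm 𝔞 : ℝ) ^ ((1 : ℝ) / 2)) := by
  have := NumberField.classNumber_eq_one_iff.mp hcl
  set E := σ₁ ((ε : 𝓞 K) : K)
  have hE : 0 < E := zero_lt_one.trans hε1
  obtain ⟨a₀, h𝔞a₀⟩ := (IsPrincipalIdealRing.principal 𝔞).principal
  have hgen : ∀ b : 𝓞 K, span {b} = 𝔞 ↔ Associated a₀ b := fun b => by
    rw [h𝔞a₀, eq_comm]
    exact span_singleton_eq_span_singleton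
  have hred : ∀ b : 𝓞 K, span {b} = 𝔞 → (absRatio σ₁ σ₂ (b : K) ∈ Ioc E⁻¹ E ↔
      E⁻¹ * |σ₂ b| < |σ₁ b| ∧ |σ₁ b| ≤ E * |σ₂ b|) := fun b hb => by
    have hb₀ : (b : K) ≠ 0 := by
      rintro h
      exact h𝔞 (by rw [← hb, span_singleton_eq_bot]; exact_mod_cast h)
    exact absRatio_mem_Ioc_iff ((map_ne_zero σ₂).mpr hb₀) _ _
  have ha₀ : a₀ ≠ 0 := by rintro rfl; exact h𝔞 (by rw [h𝔞a₀]; simp)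
  obtain ⟨a, ha, hamem, huniq⟩ :=
    exists_associated_absRatio_mem_Ioc_unique_up_to_sign hdeg hσ hε1 hεfund ha₀
  have haspan := (hgen a).mpr ha
  obtain ⟨hlt, hle⟩ := (hred a haspan).mp hamem
  have hN : |σ₁ a| * |σ₂ a| = absNorm 𝔞 := by rw [abs_mul_abs_eq_absNorm_span hdeg hσ, haspan]
  have h₁₂ : E⁻¹ * |σ₂ a| ≤ |σ₁ a| := hlt.le
  have h₂₁ : E⁻¹ * |σ₁ a| ≤ |σ₂ a| := (inv_mul_le_iff₀ hE).mpr hle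
  refine ⟨a, haspan, hlt, hle,
    fun b hb hb₁ hb₂ => huniq b ((hgen b).mp hb) ((hred b hb).mpr ⟨hb₁, hb₂⟩), ?_, ?_⟩
  · rw [← hN]
    exact rpow_half_bounds_of_inv_mul_le hE (abs_nonneg _) (abs_nonneg _) h₁₂ h₂₁
  · rw [← hN, mul_comm |σ₁ _|]
    exact rpow_half_bounds_of_inv_mul_le hE (abs_nonneg _) (abs_nonneg _) h₂₁ h₁₂

/-- For every nonzero ideal `𝔞` of `𝒪_K` there is a generator `a`,
unique up to sign, with `ε⁻¹|σ₂ a| < |σ₁ a| ≤ ε|σ₂ a|`; moreover this generator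
satisfies `ε^(-1/2) 𝒩(𝔞)^(1/2) ≤ |σᵢ a| ≤ ε^(1/2) 𝒩(𝔞)^(1/2)` for `i = 1, 2`. -/
theorem statement0
    (K : Type) [Field K] [NumberField K]
    (d : ℤ) (hd1 : 1 < d) (hdsf : Squarefree d)
    (hdeg : Module.finrank ℚ K = 2) (hθ : ∃ θ : K, θ ^ 2 = (d : K))
    (σ₁ σ₂ : K →+* ℝ) (hσ : σ₁ ≠ σ₂)
    (hcl : NumberField.classNumber K = 1)
    (ε : (𝓞 K)ˣ) (hε1 : 1 < σ₁ ((ε : 𝓞 K) : K))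
    (hεfund : ∀ u : (𝓞 K)ˣ, ∃ n : ℤ, u = ε ^ n ∨ u = -ε ^ n)
    (𝔞 : Ideal (𝓞 K)) (h𝔞 : 𝔞 ≠ ⊥) :
    ∃ a : 𝓞 K, Ideal.span {a} = 𝔞 ∧
      (σ₁ ((ε : 𝓞 K) : K))⁻¹ * |σ₂ (a : K)| < |σ₁ (a : K)| ∧
      |σ₁ (a : K)| ≤ σ₁ ((ε : 𝓞 K) : K) * |σ₂ (a : K)| ∧
      (∀ b : 𝓞 K, Ideal.span {b} = 𝔞 →
        (σ₁ ((ε : 𝓞 K) : K))⁻¹ * |σ₂ (b : K)| < |σ₁ (b : K)| →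
        |σ₁ (b : K)| ≤ σ₁ ((ε : 𝓞 K) : K) * |σ₂ (b : K)| → b = a ∨ b = -a) ∧
      ((σ₁ ((ε : 𝓞 K) : K)) ^ (-(1 : ℝ) / 2) * (Ideal.absNorm 𝔞 : ℝ) ^ ((1 : ℝ) / 2) ≤ |σ₁ (a : K)| ∧
        |σ₁ (a : K)| ≤ (σ₁ ((ε : 𝓞 K) : K)) ^ ((1 : ℝ) / 2) * (Ideal.absNorm 𝔞 : ℝ) ^ ((1 : ℝ) / 2)) ∧
      ((σ₁ ((ε : 𝓞 K) : K)) ^ (-(1 : ℝ) / 2) * (Ideal.absNorm 𝔞 : ℝ) ^ ((1 : ℝ) / 2) ≤ |σ₂ (a : K)| ∧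
        |σ₂ (a : K)| ≤ (σ₁ ((ε : 𝓞 K) : K)) ^ ((1 : ℝ) / 2) * (Ideal.absNorm 𝔞 : ℝ) ^ ((1 : ℝ) / 2)) :=
  statement0_general K hdeg σ₁ σ₂ hσ hcl ε hε1 hεfund 𝔞 h𝔞
end

section
/- (Vaughan's identity for number fields.) Let 𝔫 be a nonzero ideal of 𝒪_K and let U, V ≥ 1 be reals with U < 𝒩(𝔫). Then Λ(𝔫) = a₁(𝔫) + a₂(𝔫) + a₃(𝔫), where a₁(𝔫) := −∑ μ(𝔪)Λ(𝔩), the sum over all ordered triples (𝔯,𝔪,𝔩) of nonzero ideals with 𝔯𝔪𝔩 = 𝔫, 𝒩(𝔪) ≤ V and 𝒩(𝔩) ≤ U; a₂(𝔫) := ∑ μ(𝔩)·log 𝒩(𝔯), the sum over all ordered pairs (𝔩,𝔯) with 𝔩𝔯 = 𝔫 and 𝒩(𝔩) ≤ V; and a₃(𝔫) := −∑ Λ(𝔪)·(∑_{𝔡 | 𝔯, 𝒩(𝔡) ≤ V} μ(𝔡)), the outer sum over all ordered pairs (𝔪,𝔯) with 𝔪𝔯 = 𝔫, 𝒩(𝔪)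 > U and 𝒩(𝔯) > 1. -/
/-!
Every sum is rewritten as a sum of `μ(𝔡) Λ(𝔪)` over factorizations `𝔫 = 𝔡 𝔪 𝔯` with
`𝒩 𝔡 ≤ V`: for `a₂` this uses `log 𝒩 𝔯 = ∑_{𝔪 ∣ 𝔯} Λ(𝔪)`; `a₁` is the part with `𝒩 𝔪 ≤ U`, and
`a₃` the part with `𝒩 𝔪 > U` and `𝒩 (𝔡 𝔯) > 1`. Hence `a₂ - a₁ - a₃` is the part with
`𝒩 𝔪 > U` and `𝔡 = 𝔯 = 1`: the single term `μ(1) Λ(𝔫) = Λ(𝔫)`, which occurs because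
`𝒩 1 = 1 ≤ V` and `𝒩 𝔫 > U`.
The identity `∑_{𝔡 ∣ 𝔫} Λ(𝔡) = log 𝒩 𝔫` follows by induction over coprime factorizations:
`Λ` lives on prime powers, and a prime power divides a coprime product through exactly one factor.
-/

open NumberField Ideal

noncomputable section
open scoped Classical

/-- The von Mangoldt function on ideals of `𝒪_K`. -/
def IdealLambda (K : Type) [Field K] [NumberField K] (𝔞 : Ideal (𝓞 K)) : ℝ :=
  if ∃ (𝔭 : Ideal (𝓞 K)) (k : ℕ), 𝔭.IsPrime ∧ 𝔭 ≠ ⊥ ∧ 0 < k ∧ 𝔞 = 𝔭 ^ k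
  then Real.log (Ideal.absNorm 𝔞.radical) else 0

/-- The Möbius function on ideals of `𝒪_K`: `(-1)^k` on a squarefree product of `k`
prime ideals, and `0` otherwise. -/
def IdealMoebius (K : Type) [Field K] [NumberField K] (𝔞 : Ideal (𝓞 K)) : ℤ :=
  if Squarefree 𝔞 then (-1) ^ (UniqueFactorizationMonoid.factors 𝔞).card else 0

theorem tsum_subtype_eq_sum_filter {α β : Type*} [AddCommMonoid β] [TopologicalSpace β]
    {p q : α → Prop} [DecidablePred q] (s : Finset α) (h : ∀ x, p x ↔ x ∈ s ∧ q x)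
    (f : α → β) : ∑' x : {x // p x}, f x = ∑ x ∈ s with q x, f x := by
  rw [← Finset.tsum_subtype]
  exact (Equiv.subtypeEquivRight (p := p) (q := (· ∈ s.filter q)) fun x => by
    rw [h, Finset.mem_filter]).tsum_eq fun x => f x

theorem Finset.sum_filter_eq_add_add {ι β : Type*} [AddCommMonoid β] (s : Finset ι)
    (p q r : ι → Prop) [DecidablePred p] [DecidablePred q] [DecidablePred r] (f : ι → β) :
    ∑ x ∈ s with p x, f x = ∑ x ∈ s with p x ∧ q x, f x + ∑ x ∈ s with p x ∧ ¬q x ∧ r x, f x +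
      ∑ x ∈ s with p x ∧ ¬q x ∧ ¬r x, f x := by
  rw [← Finset.sum_filter_add_sum_filter_not (s.filter p) q, add_assoc,
    ← Finset.sum_filter_add_sum_filter_not ((s.filter p).filter (¬q ·)) r]
  simp only [Finset.filter_filter, and_assoc]

namespace UniqueFactorizationMonoid

variable {M β : Type*} [CommMonoidWithZero M] [UniqueFactorizationMonoid M] [AddCommMonoid β]

theorem _root_.IsRelPrime.isPrimePow_dvd_mul {x y d : M} (hxy : IsRelPrime x y)
    (hd : IsPrimePow d) : d ∣ x * y ↔ d ∣ x ∨ d ∣ y := by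
  refine ⟨fun h => ?_, (·.elim (Dvd.dvd.mul_right · y) (Dvd.dvd.mul_left · x))⟩
  obtain ⟨p, k, hp, hk, rfl⟩ := hd
  rcases hp.dvd_or_dvd ((dvd_pow_self p hk.ne').trans h) with hpx | hpy
  · exact .inl (hp.pow_dvd_of_dvd_mul_right k (fun hpy => hp.not_isUnit (hxy hpx hpy)) h)
  · exact .inr (hp.pow_dvd_of_dvd_mul_left k (fun hpx => hp.not_isUnit (hxy hpx hpy)) h)

section Divisors

variable [Fintype Mˣ] {n : M}

theorem finite_setOf_dvd (hn : n ≠ 0) : {d | d ∣ n}.Finite :=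
  have := fintypeSubtypeDvd n hn
  Set.finite_coe_iff.mp (Finite.of_fintype {d // d ∣ n})

theorem finite_setOf_mul_eq (hn : n ≠ 0) : {p : M × M | p.1 * p.2 = n}.Finite :=
  ((finite_setOf_dvd hn).prod (finite_setOf_dvd hn)).subset fun _ hp =>
    ⟨Dvd.intro _ hp, Dvd.intro_left _ hp⟩

theorem finite_setOf_mul_mul_eq (hn : n ≠ 0) :
    {t : M × M × M | t.1 * t.2.1 * t.2.2 = n}.Finite :=
  have hdvd := finite_setOf_dvd hn
  (hdvd.prod (hdvd.prod hdvd)).subset fun t ht => by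
    refine ⟨⟨t.2.1 * t.2.2, ?_⟩, ⟨t.1 * t.2.2, ?_⟩, ⟨t.1 * t.2.1, ?_⟩⟩ <;>
      rw [← show t.1 * t.2.1 * t.2.2 = n from ht] <;> ac_rfl

def divisorsAntidiagonal (n : M) : Finset (M × M) :=
  if hn : n = 0 then ∅ else (finite_setOf_mul_eq hn).toFinset

def divisorsAntidiagonal₃ (n : M) : Finset (M × M × M) :=
  if hn : n = 0 then ∅ else (finite_setOf_mul_mul_eq hn).toFinset

def divisors (n : M) : Finset M :=
  (divisorsAntidiagonal n).image Prod.fst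

@[simp]
theorem mem_divisorsAntidiagonal {p : M × M} :
    p ∈ divisorsAntidiagonal n ↔ p.1 * p.2 = n ∧ n ≠ 0 := by
  unfold divisorsAntidiagonal
  split_ifs with hn <;> simp [hn]

@[simp]
theorem mem_divisorsAntidiagonal₃ {t : M × M × M} :
    t ∈ divisorsAntidiagonal₃ n ↔ t.1 * t.2.1 * t.2.2 = n ∧ n ≠ 0 := by
  unfold divisorsAntidiagonal₃
  split_ifs with hn <;> simp [hn]

@[simp]
theorem mem_divisors {d : M} : d ∈ divisors n ↔ d ∣ n ∧ n ≠ 0 := by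
  simp [divisors, dvd_def, eq_comm]

theorem sum_divisorsAntidiagonal_fst (f : M → β) :
    ∑ p ∈ divisorsAntidiagonal n, f p.1 = ∑ d ∈ divisors n, f d := by
  refine (Finset.sum_image fun p hp q hq hpq => Prod.ext hpq ?_).symm
  simp only [Finset.mem_coe, mem_divisorsAntidiagonal] at hp hq
  have hp0 : p.1 ≠ 0 := left_ne_zero_of_mul (hp.1 ▸ hp.2)
  exact mul_left_cancel₀ hp0 (hp.1.trans (hpq ▸ hq.1.symm))

theorem sum_divisorsAntidiagonal_sum_divisorsAntidiagonal (G : M × M → M × M → β) :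
    ∑ p ∈ divisorsAntidiagonal n, ∑ q ∈ divisorsAntidiagonal p.2, G p q =
      ∑ t ∈ divisorsAntidiagonal₃ n, G (t.1, t.2.1 * t.2.2) (t.2.1, t.2.2) := by
  rw [Finset.sum_sigma']
  refine Finset.sum_nbij' (fun x => (x.1.1, x.2.1, x.2.2))
    (fun t => ⟨(t.1, t.2.1 * t.2.2), (t.2.1, t.2.2)⟩) ?_ ?_ ?_ ?_ ?_
  · rintro ⟨⟨a, r⟩, b, c⟩ h
    simp only [Finset.mem_sigma, mem_divisorsAntidiagonal, mem_divisorsAntidiagonal₃] at h ⊢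
    obtain ⟨⟨rfl, hn⟩, rfl, -⟩ := h
    exact ⟨mul_assoc _ _ _, hn⟩
  · rintro ⟨a, b, c⟩ h
    simp only [Finset.mem_sigma, mem_divisorsAntidiagonal, mem_divisorsAntidiagonal₃] at h ⊢
    obtain ⟨rfl, hn⟩ := h
    exact ⟨⟨(mul_assoc _ _ _).symm, hn⟩, trivial, right_ne_zero_of_mul (mul_assoc a b c ▸ hn)⟩
  · rintro ⟨⟨a, r⟩, b, c⟩ h
    simp only [Finset.mem_sigma, mem_divisorsAntidiagonal] at h
    obtain ⟨-, rfl, -⟩ := h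
    rfl
  · intro _ _
    rfl
  · rintro ⟨⟨a, r⟩, b, c⟩ h
    simp only [Finset.mem_sigma, mem_divisorsAntidiagonal] at h
    obtain ⟨-, rfl, -⟩ := h
    rfl

theorem sum_filter_divisorsAntidiagonal₃_equiv (e : M × M × M ≃ M × M × M)
    (he : ∀ t, (e t).1 * (e t).2.1 * (e t).2.2 = t.1 * t.2.1 * t.2.2)
    (P : M × M × M → Prop) [DecidablePred P] (f : M × M × M → β) :
    ∑ t ∈ divisorsAntidiagonal₃ n with P (e t), f (e t) =
      ∑ t ∈ divisorsAntidiagonal₃ n with P t, f t :=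
  Finset.sum_equiv e (by simp [he]) fun _ _ => rfl

theorem tsum_dvd_eq_sum_filter_divisorsAntidiagonal [TopologicalSpace β] {r : M} (hr : r ≠ 0)
    (P : M → Prop) [DecidablePred P] (f : M → β) :
    ∑' d : {d // d ∣ r ∧ P d}, f d = ∑ q ∈ divisorsAntidiagonal r with P q.1, f q.1 := by
  rw [tsum_subtype_eq_sum_filter (divisors r) (q := P) (by simp [hr]), Finset.sum_filter,
    Finset.sum_filter, sum_divisorsAntidiagonal_fst fun d => if P d then f d else 0]

section SubsingletonUnits

variable [Subsingleton Mˣ]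

theorem divisors_one [Nontrivial M] : divisors (1 : M) = {1} := by
  ext d
  simp [← isUnit_iff_dvd_one, isUnit_iff_eq_one]

theorem divisors_prime_pow {p : M} (hp : Prime p) (i : ℕ) :
    divisors (p ^ i) = (Finset.range (i + 1)).image (p ^ ·) := by
  ext d
  simp [dvd_prime_pow hp, associated_iff_eq, pow_ne_zero _ hp.ne_zero, eq_comm]

theorem sum_divisors_prime_pow {p : M} (hp : Prime p) (i : ℕ) (f : M → β) :
    ∑ d ∈ divisors (p ^ i), f d = ∑ j ∈ Finset.range (i + 1), f (p ^ j) := by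
  rw [divisors_prime_pow hp, Finset.sum_image fun _ _ _ _ h =>
    pow_injective_of_not_isUnit hp.not_isUnit hp.ne_zero h]

end SubsingletonUnits

theorem sum_divisors_mul_of_isRelPrime {x y : M} (hxy : IsRelPrime x y) (hxy0 : x * y ≠ 0)
    (f : M → β) (hf : ∀ d, ¬IsPrimePow d → f d = 0) :
    ∑ d ∈ divisors (x * y), f d = ∑ d ∈ divisors x, f d + ∑ d ∈ divisors y, f d := by
  have hx0 := left_ne_zero_of_mul hxy0
  have hy0 := right_ne_zero_of_mul hxy0
  rw [← Finset.sum_union_inter, Finset.sum_eq_zero (s := divisors x ∩ divisors y), add_zero]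
  · refine (Finset.sum_subset (fun d hd => ?_) fun d hd hd' => hf d fun hpp => hd' ?_).symm
    · simp only [Finset.mem_union, mem_divisors, hx0, hy0, hxy0, ne_eq, not_false_eq_true,
        and_true] at hd ⊢
      exact hd.elim (Dvd.dvd.mul_right · y) (Dvd.dvd.mul_left · x)
    · simp only [Finset.mem_union, mem_divisors, hx0, hy0, hxy0, ne_eq, not_false_eq_true,
        and_true] at hd ⊢
      exact (hxy.isPrimePow_dvd_mul hpp).mp hd
  · intro d hd
    simp only [Finset.mem_inter, mem_divisors] at hd
    exact hf d (hxy hd.1.1 hd.2.1).not_isPrimePow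

end Divisors

end UniqueFactorizationMonoid

namespace NumberField

variable {K : Type} [Field K] [NumberField K]

open UniqueFactorizationMonoid

theorem idealMoebius_one : IdealMoebius K 1 = 1 := by
  rw [IdealMoebius, if_pos squarefree_one, UniqueFactorizationMonoid.factors_one]
  rfl

theorem idealLambda_eq_zero_of_not_isPrimePow {𝔞 : Ideal (𝓞 K)} (h : ¬IsPrimePow 𝔞) :
    IdealLambda K 𝔞 = 0 :=
  if_neg fun ⟨𝔭, k, hp, hp0, hk, h𝔞⟩ =>
    h ⟨𝔭, k, (Ideal.prime_iff_isPrime hp0).mpr hp, hk, h𝔞.symm⟩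

theorem idealLambda_prime_pow {𝔭 : Ideal (𝓞 K)} (hp : Prime 𝔭) {k : ℕ} (hk : k ≠ 0) :
    IdealLambda K (𝔭 ^ k) = Real.log (absNorm 𝔭) := by
  have hp' : 𝔭.IsPrime := (Ideal.prime_iff_isPrime hp.ne_zero).mp hp
  rw [IdealLambda, if_pos ⟨𝔭, k, hp', hp.ne_zero, Nat.pos_of_ne_zero hk, rfl⟩,
    Ideal.radical_pow _ hk, hp'.radical]

theorem sum_divisors_idealLambda {𝔫 : Ideal (𝓞 K)} (h𝔫 : 𝔫 ≠ ⊥) :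
    ∑ 𝔡 ∈ divisors 𝔫, IdealLambda K 𝔡 = Real.log (absNorm 𝔫) := by
  induction 𝔫 using UniqueFactorizationMonoid.induction_on_coprime with
  | h0 => exact absurd rfl h𝔫
  | h1 hu =>
    rw [isUnit_iff_eq_one.mp hu, divisors_one, Finset.sum_singleton,
      idealLambda_eq_zero_of_not_isPrimePow not_isPrimePow_one, map_one, Nat.cast_one,
      Real.log_one]
  | hpr i hp =>
    rw [sum_divisors_prime_pow hp, Finset.sum_range_succ', pow_zero,
      idealLambda_eq_zero_of_not_isPrimePow not_isPrimePow_one, add_zero,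
      Finset.sum_congr rfl fun j _ => idealLambda_prime_pow hp j.succ_ne_zero,
      Finset.sum_const, Finset.card_range, nsmul_eq_mul, map_pow, Nat.cast_pow, Real.log_pow]
  | hcp hxy hx hy =>
    have hx0 := left_ne_zero_of_mul h𝔫
    have hy0 := right_ne_zero_of_mul h𝔫
    rw [sum_divisors_mul_of_isRelPrime hxy h𝔫 _ fun _ => idealLambda_eq_zero_of_not_isPrimePow,
      hx hx0, hy hy0, map_mul, Nat.cast_mul, Real.log_mul]
    all_goals exact Nat.cast_ne_zero.mpr (mt absNorm_eq_zero_iff.mp ‹_›)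

theorem tsum_idealMoebius_mul_idealLambda_eq_sum {𝔫 : Ideal (𝓞 K)} (h𝔫 : 𝔫 ≠ ⊥) (U V : ℝ) :
    ∑' t : {t : Ideal (𝓞 K) × Ideal (𝓞 K) × Ideal (𝓞 K) //
        t.1 * t.2.1 * t.2.2 = 𝔫 ∧ (absNorm t.2.1 : ℝ) ≤ V ∧ (absNorm t.2.2 : ℝ) ≤ U},
      (IdealMoebius K t.1.2.1 : ℝ) * IdealLambda K t.1.2.2 =
    ∑ t ∈ divisorsAntidiagonal₃ 𝔫 with (absNorm t.1 : ℝ) ≤ V ∧ (absNorm t.2.1 : ℝ) ≤ U,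
      (IdealMoebius K t.1 : ℝ) * IdealLambda K t.2.1 := by
  refine (tsum_subtype_eq_sum_filter (divisorsAntidiagonal₃ 𝔫)
    (q := fun t => (absNorm t.2.1 : ℝ) ≤ V ∧ (absNorm t.2.2 : ℝ) ≤ U) (by simp [h𝔫])
    fun t => (IdealMoebius K t.2.1 : ℝ) * IdealLambda K t.2.2).trans ?_
  exact sum_filter_divisorsAntidiagonal₃_equiv
    ⟨fun t => (t.2.1, t.2.2, t.1), fun t => (t.2.2, t.1, t.2.1), fun _ => rfl, fun _ => rfl⟩
    (fun t => (mul_rotate t.1 t.2.1 t.2.2).symm)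
    (fun t => (absNorm t.1 : ℝ) ≤ V ∧ (absNorm t.2.1 : ℝ) ≤ U)
    (fun t => (IdealMoebius K t.1 : ℝ) * IdealLambda K t.2.1)

theorem tsum_idealMoebius_mul_log_absNorm_eq_sum {𝔫 : Ideal (𝓞 K)} (h𝔫 : 𝔫 ≠ ⊥) (V : ℝ) :
    ∑' p : {p : Ideal (𝓞 K) × Ideal (𝓞 K) // p.1 * p.2 = 𝔫 ∧ (absNorm p.1 : ℝ) ≤ V},
      (IdealMoebius K p.1.1 : ℝ) * Real.log (absNorm p.1.2) =
    ∑ t ∈ divisorsAntidiagonal₃ 𝔫 with (absNorm t.1 : ℝ) ≤ V,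
      (IdealMoebius K t.1 : ℝ) * IdealLambda K t.2.1 := by
  rw [tsum_subtype_eq_sum_filter (divisorsAntidiagonal 𝔫) (q := fun p => (absNorm p.1 : ℝ) ≤ V)
      (by simp [h𝔫]) fun p => (IdealMoebius K p.1 : ℝ) * Real.log (absNorm p.2),
    Finset.sum_filter, Finset.sum_filter, ← sum_divisorsAntidiagonal_sum_divisorsAntidiagonal
      fun p q => if (absNorm p.1 : ℝ) ≤ V then (IdealMoebius K p.1 : ℝ) * IdealLambda K q.1 else 0]
  refine Finset.sum_congr rfl fun p hp => ?_
  have hp2 : p.2 ≠ ⊥ := right_ne_zero_of_mul ((mem_divisorsAntidiagonal.mp hp).1 ▸ h𝔫)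
  by_cases hV : (absNorm p.1 : ℝ) ≤ V
  · simp only [hV, if_true]
    rw [← Finset.mul_sum, sum_divisorsAntidiagonal_fst, sum_divisors_idealLambda hp2]
  · simp only [hV, if_false, Finset.sum_const_zero]

theorem tsum_idealLambda_mul_tsum_idealMoebius_eq_sum {𝔫 : Ideal (𝓞 K)} (h𝔫 : 𝔫 ≠ ⊥)
    (U V : ℝ) :
    ∑' p : {p : Ideal (𝓞 K) × Ideal (𝓞 K) //
        p.1 * p.2 = 𝔫 ∧ U < (absNorm p.1 : ℝ) ∧ 1 < absNorm p.2},
      IdealLambda K p.1.1 *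
        ∑' 𝔡 : {𝔡 : Ideal (𝓞 K) // 𝔡 ∣ p.1.2 ∧ (absNorm 𝔡 : ℝ) ≤ V}, (IdealMoebius K 𝔡 : ℝ) =
    ∑ t ∈ divisorsAntidiagonal₃ 𝔫 with
        (absNorm t.1 : ℝ) ≤ V ∧ U < (absNorm t.2.1 : ℝ) ∧ 1 < absNorm (t.1 * t.2.2),
      (IdealMoebius K t.1 : ℝ) * IdealLambda K t.2.1 := by
  calc _ = ∑ p ∈ divisorsAntidiagonal 𝔫, ∑ q ∈ divisorsAntidiagonal p.2,
          if (absNorm q.1 : ℝ) ≤ V ∧ U < (absNorm p.1 : ℝ) ∧ 1 < absNorm p.2 then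
            (IdealMoebius K q.1 : ℝ) * IdealLambda K p.1 else 0 := by
        rw [tsum_subtype_eq_sum_filter (divisorsAntidiagonal 𝔫)
          (q := fun p => U < (absNorm p.1 : ℝ) ∧ 1 < absNorm p.2) (by simp [h𝔫]) fun p =>
            IdealLambda K p.1 * ∑' 𝔡 : {𝔡 : Ideal (𝓞 K) // 𝔡 ∣ p.2 ∧ (absNorm 𝔡 : ℝ) ≤ V},
              (IdealMoebius K 𝔡 : ℝ), Finset.sum_filter]
        refine Finset.sum_congr rfl fun p hp => ?_
        have hp2 : p.2 ≠ ⊥ := right_ne_zero_of_mul ((mem_divisorsAntidiagonal.mp hp).1 ▸ h𝔫)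
        rw [tsum_dvd_eq_sum_filter_divisorsAntidiagonal hp2 (fun 𝔡 => (absNorm 𝔡 : ℝ) ≤ V)
          fun 𝔡 => (IdealMoebius K 𝔡 : ℝ), Finset.sum_filter, Finset.mul_sum]
        by_cases h : U < (absNorm p.1 : ℝ) ∧ 1 < absNorm p.2
        · simp only [h, and_true, if_true, mul_ite, mul_zero, mul_comm]
        · simp only [h, and_false, if_false, Finset.sum_const_zero]
    _ = ∑ t ∈ divisorsAntidiagonal₃ 𝔫,
          if (absNorm t.2.1 : ℝ) ≤ V ∧ U < (absNorm t.1 : ℝ) ∧ 1 < absNorm (t.2.1 * t.2.2) then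
            (IdealMoebius K t.2.1 : ℝ) * IdealLambda K t.1 else 0 :=
      sum_divisorsAntidiagonal_sum_divisorsAntidiagonal _
    _ = _ := (Finset.sum_filter _ _).symm.trans <| sum_filter_divisorsAntidiagonal₃_equiv
      ⟨fun t => (t.2.1, t.1, t.2.2), fun t => (t.2.1, t.1, t.2.2), fun _ => rfl, fun _ => rfl⟩
      (fun t => congrArg (· * t.2.2) (mul_comm t.2.1 t.1))
      (fun t => (absNorm t.1 : ℝ) ≤ V ∧ U < (absNorm t.2.1 : ℝ) ∧ 1 < absNorm (t.1 * t.2.2))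
      fun t => (IdealMoebius K t.1 : ℝ) * IdealLambda K t.2.1

theorem sum_filter_absNorm_mul_le_one_eq_idealLambda {𝔫 : Ideal (𝓞 K)} (h𝔫 : 𝔫 ≠ ⊥)
    {U V : ℝ} (hV : 1 ≤ V) (hUn : U < (absNorm 𝔫 : ℝ)) :
    ∑ t ∈ divisorsAntidiagonal₃ 𝔫 with
        (absNorm t.1 : ℝ) ≤ V ∧ U < (absNorm t.2.1 : ℝ) ∧ ¬1 < absNorm (t.1 * t.2.2),
      (IdealMoebius K t.1 : ℝ) * IdealLambda K t.2.1 = IdealLambda K 𝔫 := by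
  rw [Finset.sum_eq_single_of_mem (1, 𝔫, 1)]
  · rw [idealMoebius_one, Int.cast_one, one_mul]
  · simp [h𝔫, hV, hUn]
  · rintro ⟨𝔡, 𝔪, 𝔯⟩ ht hne
    simp only [Finset.mem_filter, mem_divisorsAntidiagonal₃] at ht
    obtain ⟨⟨rfl, -⟩, -, -, hle⟩ := ht
    have h𝔡𝔯0 : 𝔡 * 𝔯 ≠ ⊥ := left_ne_zero_of_mul (by rwa [mul_right_comm] at h𝔫)
    have h𝔡𝔯 : 𝔡 * 𝔯 = 1 := by
      rw [Ideal.one_eq_top, ← absNorm_eq_one_iff]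
      have := absNorm_eq_zero_iff.not.mpr h𝔡𝔯0
      omega
    obtain ⟨rfl, rfl⟩ := mul_eq_one.mp h𝔡𝔯
    exact absurd (by rw [one_mul, mul_one]) hne

end NumberField

theorem statement5_general
    (K : Type) [Field K] [NumberField K]
    (𝔫 : Ideal (𝓞 K)) (h𝔫 : 𝔫 ≠ ⊥)
    (U V : ℝ) (hV : 1 ≤ V) (hUn : U < (Ideal.absNorm 𝔫 : ℝ)) :
    IdealLambda K 𝔫 =
      -- a₁(𝔫)
      (-∑' t : {t : Ideal (𝓞 K) × Ideal (𝓞 K) × Ideal (𝓞 K) //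
          t.1 * t.2.1 * t.2.2 = 𝔫 ∧ (Ideal.absNorm t.2.1 : ℝ) ≤ V ∧
          (Ideal.absNorm t.2.2 : ℝ) ≤ U},
        (IdealMoebius K t.1.2.1 : ℝ) * IdealLambda K t.1.2.2)
      -- a₂(𝔫)
      + (∑' p : {p : Ideal (𝓞 K) × Ideal (𝓞 K) //
          p.1 * p.2 = 𝔫 ∧ (Ideal.absNorm p.1 : ℝ) ≤ V},
        (IdealMoebius K p.1.1 : ℝ) * Real.log (Ideal.absNorm p.1.2))
      -- a₃(𝔫)
      + (-∑' p : {p : Ideal (𝓞 K) × Ideal (𝓞 K) //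
          p.1 * p.2 = 𝔫 ∧ U < (Ideal.absNorm p.1 : ℝ) ∧ 1 < Ideal.absNorm p.2},
        IdealLambda K p.1.1 *
          ∑' 𝔡 : {𝔡 : Ideal (𝓞 K) // 𝔡 ∣ p.1.2 ∧ (Ideal.absNorm 𝔡 : ℝ) ≤ V},
            (IdealMoebius K 𝔡 : ℝ)) := by
  rw [tsum_idealMoebius_mul_idealLambda_eq_sum h𝔫, tsum_idealMoebius_mul_log_absNorm_eq_sum h𝔫,
    tsum_idealLambda_mul_tsum_idealMoebius_eq_sum h𝔫,
    ← sum_filter_absNorm_mul_le_one_eq_idealLambda h𝔫 hV hUn]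
  have hsplit := Finset.sum_filter_eq_add_add (UniqueFactorizationMonoid.divisorsAntidiagonal₃ 𝔫)
    (fun t => (absNorm t.1 : ℝ) ≤ V) (fun t => (absNorm t.2.1 : ℝ) ≤ U)
    (fun t => 1 < absNorm (t.1 * t.2.2)) fun t => (IdealMoebius K t.1 : ℝ) * IdealLambda K t.2.1
  simp only [not_le] at hsplit
  linarith

/-- (Vaughan's identity for number fields.) -/
theorem statement5
    (K : Type) [Field K] [NumberField K]
    (𝔫 : Ideal (𝓞 K)) (h𝔫 : 𝔫 ≠ ⊥)
    (U V : ℝ) (hU : 1 ≤ U) (hV : 1 ≤ V) (hUn : U < (Ideal.absNorm 𝔫 : ℝ)) :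
    IdealLambda K 𝔫 =
      -- a₁(𝔫)
      (-∑' t : {t : Ideal (𝓞 K) × Ideal (𝓞 K) × Ideal (𝓞 K) //
          t.1 * t.2.1 * t.2.2 = 𝔫 ∧ (Ideal.absNorm t.2.1 : ℝ) ≤ V ∧
          (Ideal.absNorm t.2.2 : ℝ) ≤ U},
        (IdealMoebius K t.1.2.1 : ℝ) * IdealLambda K t.1.2.2)
      -- a₂(𝔫)
      + (∑' p : {p : Ideal (𝓞 K) × Ideal (𝓞 K) //
          p.1 * p.2 = 𝔫 ∧ (Ideal.absNorm p.1 : ℝ) ≤ V},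
        (IdealMoebius K p.1.1 : ℝ) * Real.log (Ideal.absNorm p.1.2))
      -- a₃(𝔫)
      + (-∑' p : {p : Ideal (𝓞 K) × Ideal (𝓞 K) //
          p.1 * p.2 = 𝔫 ∧ U < (Ideal.absNorm p.1 : ℝ) ∧ 1 < Ideal.absNorm p.2},
        IdealLambda K p.1.1 *
          ∑' 𝔡 : {𝔡 : Ideal (𝓞 K) // 𝔡 ∣ p.1.2 ∧ (Ideal.absNorm 𝔡 : ℝ) ≤ V},
            (IdealMoebius K 𝔡 : ℝ)) :=
  statement5_general K 𝔫 h𝔫 U V hV hUn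

end
end

section
/- (Bessel's inequality, Halász–Bombieri form.) Let E be a complex inner product space, let R ≥ 1 be an integer, and let v, Φ₁, …, Φ_R ∈ E. Then ∑_{r=1}^{R} |⟨v, Φ_r⟩|² ≤ ‖v‖² · max_{1 ≤ r ≤ R} ∑_{s=1}^{R} |⟨Φ_r, Φ_s⟩|. -/
/-!
With `a r = ⟪v, Φ r⟫` and `S = ∑ r, conj (a r) • Φ r`, one has `⟪v, S⟫ = ∑ r, ‖a r‖²`, so
Cauchy–Schwarz gives `∑ ‖a r‖² ≤ ‖v‖ ‖S‖`. Expanding `‖S‖²` and bounding each product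
`‖a r‖ ‖a s‖` by `(‖a r‖² + ‖a s‖²) / 2` (Schur's test, using `|⟪Φ r, Φ s⟫| = |⟪Φ s, Φ r⟫|`)
gives `‖S‖² ≤ (∑ ‖a r‖²) · max_r ∑_s |⟪Φ r, Φ s⟫|`; squaring the first bound and dividing
by `∑ ‖a r‖²` finishes.
-/

open Finset RCLike ComplexConjugate

theorem sum_sum_mul_mul_le_of_symm {ι : Type*} (t : Finset ι) (x : ι → ℝ) (b : ι → ι → ℝ)
    (M : ℝ) (hb_symm : ∀ r s, b r s = b s r) (hb_nonneg : ∀ r s, 0 ≤ b r s)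
    (hM : ∀ r ∈ t, ∑ s ∈ t, b r s ≤ M) :
    ∑ r ∈ t, ∑ s ∈ t, x r * x s * b r s ≤ (∑ r ∈ t, x r ^ 2) * M := by
  have h_amgm : ∀ r s, x r * x s * b r s ≤ (x r ^ 2 * b r s + x s ^ 2 * b s r) / 2 :=
    fun r s => by
      rw [← hb_symm r s]
      nlinarith [mul_nonneg (sq_nonneg (x r - x s)) (hb_nonneg r s)]
  calc ∑ r ∈ t, ∑ s ∈ t, x r * x s * b r s
      ≤ ∑ r ∈ t, ∑ s ∈ t, (x r ^ 2 * b r s + x s ^ 2 * b s r) / 2 :=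
        sum_le_sum fun r _ => sum_le_sum fun s _ => h_amgm r s
    _ = ∑ r ∈ t, ∑ s ∈ t, x r ^ 2 * b r s := by
        simp only [← sum_div, sum_add_distrib]
        rw [sum_comm (f := fun r s => x s ^ 2 * b s r)]
        ring
    _ ≤ ∑ r ∈ t, x r ^ 2 * M := by
        simp only [← mul_sum]
        exact sum_le_sum fun r hr => mul_le_mul_of_nonneg_left (hM r hr) (sq_nonneg _)
    _ = (∑ r ∈ t, x r ^ 2) * M := by rw [sum_mul]

section InnerProductSpace

variable {𝕜 E ι : Type*} [RCLike 𝕜] [NormedAddCommGroup E] [InnerProductSpace 𝕜 E] [Fintype ι]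

local notation "⟪" x ", " y "⟫" => inner 𝕜 x y

theorem norm_sum_smul_sq_le (c : ι → 𝕜) (Φ : ι → E) :
    ‖∑ r, c r • Φ r‖ ^ 2 ≤ (∑ r, ‖c r‖ ^ 2) * ⨆ r, ∑ s, ‖⟪Φ r, Φ s⟫‖ := by
  have h_expand : ⟪∑ r, c r • Φ r, ∑ s, c s • Φ s⟫ =
      ∑ r, ∑ s, conj (c r) * c s * ⟪Φ r, Φ s⟫ := by
    rw [sum_inner]
    simp only [inner_sum, inner_smul_left, inner_smul_right, mul_assoc,
      mul_left_comm (c _)]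
  have h_row : ∀ r ∈ (univ : Finset ι), ∑ s, ‖⟪Φ r, Φ s⟫‖ ≤ ⨆ r, ∑ s, ‖⟪Φ r, Φ s⟫‖ :=
    fun r _ => le_ciSup (f := fun r => ∑ s, ‖⟪Φ r, Φ s⟫‖) (Set.finite_range _).bddAbove r
  calc ‖∑ r, c r • Φ r‖ ^ 2 = ‖⟪∑ r, c r • Φ r, ∑ s, c s • Φ s⟫‖ := by
        rw [inner_self_eq_norm_sq_to_K, norm_pow, norm_ofReal, abs_norm]
    _ ≤ ∑ r, ∑ s, ‖c r‖ * ‖c s‖ * ‖⟪Φ r, Φ s⟫‖ := by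
        rw [h_expand]
        refine (norm_sum_le _ _).trans (sum_le_sum fun r _ => (norm_sum_le _ _).trans ?_)
        simp only [norm_mul, norm_conj, le_refl]
    _ ≤ (∑ r, ‖c r‖ ^ 2) * ⨆ r, ∑ s, ‖⟪Φ r, Φ s⟫‖ :=
        sum_sum_mul_mul_le_of_symm _ _ _ _ (fun r s => norm_inner_symm (Φ r) (Φ s))
          (fun _ _ => norm_nonneg _) h_row

theorem sum_norm_inner_sq_le_halasz (v : E) (Φ : ι → E) :
    ∑ r, ‖⟪v, Φ r⟫‖ ^ 2 ≤ ‖v‖ ^ 2 * ⨆ r, ∑ s, ‖⟪Φ r, Φ s⟫‖ := by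
  set M := ⨆ r, ∑ s, ‖⟪Φ r, Φ s⟫‖
  set A := ∑ r, ‖⟪v, Φ r⟫‖ ^ 2
  set S := ∑ r, conj ⟪v, Φ r⟫ • Φ r
  have h_inner : ⟪v, S⟫ = (A : 𝕜) := by
    simp only [S, A, inner_sum, inner_smul_right, mul_comm (conj _), mul_conj, ofReal_sum,
      ofReal_pow]
  have h_cs : A ≤ ‖v‖ * ‖S‖ := by
    have := norm_inner_le_norm (𝕜 := 𝕜) v S
    rwa [h_inner, norm_ofReal, abs_of_nonneg (by positivity)] at this
  have h_S : ‖S‖ ^ 2 ≤ A * M := by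
    simpa only [S, A, norm_conj] using norm_sum_smul_sq_le (fun r => conj ⟪v, Φ r⟫) Φ
  have hM : 0 ≤ M := Real.iSup_nonneg fun r => sum_nonneg fun s _ => norm_nonneg _
  have hA : 0 ≤ A := by positivity
  have h_sq : A * A ≤ (‖v‖ ^ 2 * M) * A := by
    calc A * A ≤ (‖v‖ * ‖S‖) ^ 2 := by nlinarith
      _ = ‖v‖ ^ 2 * ‖S‖ ^ 2 := by ring
      _ ≤ ‖v‖ ^ 2 * (A * M) := by gcongr
      _ = (‖v‖ ^ 2 * M) * A := by ring
  rcases hA.eq_or_lt with h0 | hpos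
  · rw [← h0]; positivity
  · exact le_of_mul_le_mul_right h_sq hpos

end InnerProductSpace

theorem statement6_general
    (E : Type*) [NormedAddCommGroup E] [InnerProductSpace ℂ E]
    (R : ℕ) (v : E) (Φ : Fin R → E) :
    ∑ r : Fin R, ‖(inner ℂ v (Φ r) : ℂ)‖ ^ 2 ≤
      ‖v‖ ^ 2 * ⨆ r : Fin R, ∑ s : Fin R, ‖(inner ℂ (Φ r) (Φ s) : ℂ)‖ :=
  sum_norm_inner_sq_le_halasz v Φ

/-- (Bessel's inequality, Halász–Bombieri form.) -/
theorem statement6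
    (E : Type*) [NormedAddCommGroup E] [InnerProductSpace ℂ E]
    (R : ℕ) (hR : 1 ≤ R) (v : E) (Φ : Fin R → E) :
    ∑ r : Fin R, ‖(inner ℂ v (Φ r) : ℂ)‖ ^ 2 ≤
      ‖v‖ ^ 2 * ⨆ r : Fin R, ∑ s : Fin R, ‖(inner ℂ (Φ r) (Φ s) : ℂ)‖ :=
  statement6_general E R v Φ
end

section
/- Let χ be a Dirichlet character modulo a nonzero ideal 𝔮 of 𝒪_K, let v ∈ ℝ and u₁, u₂ ∈ {0,1}, and define χ_∞(α) := |σ₁(α)/σ₂(α)|^{iv}·sgn(σ₁(α))^{u₁}·sgn(σ₂(α))^{u₂} for nonzero α ∈ K. Set g := 0 if sgn(σ₂(ε))^{u₂} = 1 and g := 1 if sgn(σ₂(ε))^{u₂} = −1, and ρ := g/2 − arg(χ(ε))/(2π) with arg taking values in (−π, π]. Then χ(u)χ_∞(u) = 1 for every unit u ∈ 𝒪_Kˣ if and only if both of the following hold: (i) v = π(n + ρ)/log ε for some n ∈ ℤ, and (ii) u₁ = u₂ if χ(−1) = 1, and u₁ ≠ u₂ if χ(−1) = −1. -/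
/-!
Every unit is `±εⁿ`, so the character `u ↦ χ(u) χ_∞(u)` of `𝒪_Kˣ` is trivial iff it is trivial
at `ε` and at `-1`. Since `σ₁(ε) σ₂(ε) = N(ε) = ±1`, we have `|σ₁(ε)/σ₂(ε)| = σ₁(ε)²`, and
`χ(ε) χ_∞(ε) = exp(i (arg χ(ε) + 2 v log ε + π g))`; this is `1` exactly when `v` lies in the
progression `π (ℤ + ρ) / log ε`. At `-1` the value is `χ(-1) (-1)^(u₁ + u₂)`, which gives the
parity condition.
-/

open NumberField Ideal

noncomputable section
open scoped Classical

/-- The infinite part `χ_∞(α) = |σ₁(α)/σ₂(α)|^{iv} sgn(σ₁(α))^{u₁} sgn(σ₂(α))^{u₂}`. -/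
def ChiInf (K : Type) [Field K] [NumberField K] (σ₁ σ₂ : K →+* ℝ) (v : ℝ) (u₁ u₂ : ℕ)
    (α : K) : ℂ :=
  ((|σ₁ α / σ₂ α| : ℝ) : ℂ) ^ (Complex.I * (v : ℂ)) *
    ((Real.sign (σ₁ α) : ℝ) : ℂ) ^ u₁ * ((Real.sign (σ₂ α) : ℝ) : ℂ) ^ u₂

theorem Real.sign_mul (x y : ℝ) : Real.sign (x * y) = Real.sign x * Real.sign y := by
  rcases lt_trichotomy x 0 with hx | hx | hx <;> rcases lt_trichotomy y 0 with hy | hy | hy <;>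
    simp [Real.sign_of_neg, Real.sign_of_pos, Real.sign_zero, hx, hy, mul_pos_of_neg_of_neg,
      mul_neg_of_neg_of_pos, mul_neg_of_pos_of_neg]

theorem mul_neg_one_pow_mul_neg_one_pow_eq_one_iff {R : Type*} [CommRing R] [CharZero R] {c : R}
    (hc : c = 1 ∨ c = -1) {u₁ u₂ : ℕ} (hu₁ : u₁ ≤ 1) (hu₂ : u₂ ≤ 1) :
    c * (-1) ^ u₁ * (-1) ^ u₂ = 1 ↔ (c = 1 → u₁ = u₂) ∧ (c = -1 → u₁ ≠ u₂) := by
  interval_cases u₁ <;> interval_cases u₂ <;> rcases hc with rfl | rfl <;> norm_num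

theorem Complex.exp_ofReal_mul_I_eq_one_iff (x : ℝ) :
    Complex.exp (x * Complex.I) = 1 ↔ ∃ m : ℤ, x = m * (2 * Real.pi) := by
  rw [Complex.exp_eq_one_iff]
  refine exists_congr fun m ↦ ⟨fun h ↦ ?_, fun h ↦ by rw [h]; push_cast; ring⟩
  simpa using congrArg Complex.im h

theorem exists_int_eq_mul_two_pi_iff {L : ℝ} (hL : L ≠ 0) (θ v : ℝ) (k : ℤ) :
    (∃ m : ℤ, θ + 2 * v * L + Real.pi * k = m * (2 * Real.pi)) ↔
      ∃ n : ℤ, v = Real.pi * (n + (k / 2 - θ / (2 * Real.pi))) / L := by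
  have hπ := Real.pi_ne_zero
  constructor
  · rintro ⟨m, hm⟩
    refine ⟨m - k, ?_⟩
    rw [eq_div_iff hL]
    push_cast
    field_simp
    linear_combination hm
  · rintro ⟨n, hn⟩
    refine ⟨n + k, ?_⟩
    rw [eq_div_iff hL] at hn
    field_simp at hn
    push_cast
    linear_combination hn

theorem Complex.ofReal_eq_exp_of_eq_one_or_neg_one {t : ℝ} (ht : t = 1 ∨ t = -1) :
    (t : ℂ) = Complex.exp ((Real.pi * if t = 1 then 0 else 1 : ℝ) * Complex.I) := by
  rcases ht with rfl | rfl
  · simp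
  · rw [if_neg (by norm_num), mul_one, Complex.exp_pi_mul_I]
    push_cast
    rfl

theorem MulChar.norm_apply_eq_one_of_isUnit {R F : Type*} [CommRing R] [Finite Rˣ] [NormedField F]
    (χ : MulChar R F) {a : R} (ha : IsUnit a) : ‖χ a‖ = 1 := by
  obtain ⟨u, rfl⟩ := ha
  refine (pow_eq_one_iff_of_nonneg (norm_nonneg _) (Nat.card_pos (α := Rˣ)).ne').mp ?_
  rw [← norm_pow, ← map_pow, ← Units.val_pow_eq_pow_val, pow_card_eq_one', Units.val_one, map_one,
    norm_one]

theorem MulChar.apply_neg_one_eq_one_or_neg_one {R R' : Type*} [CommRing R] [CommRing R']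
    [NoZeroDivisors R'] (χ : MulChar R R') : χ (-1) = 1 ∨ χ (-1) = -1 :=
  mul_self_eq_one_iff.mp (by rw [← map_mul, neg_one_mul, neg_neg, map_one])

theorem MonoidHom.forall_eq_one_iff_of_forall_eq_zpow_or_neg_zpow {R M : Type*} [Ring R]
    [DivisionMonoid M] {ε : Rˣ} (hε : ∀ u : Rˣ, ∃ n : ℤ, u = ε ^ n ∨ u = -ε ^ n) (f : Rˣ →* M) :
    (∀ u, f u = 1) ↔ f ε = 1 ∧ f (-1) = 1 := by
  refine ⟨fun h ↦ ⟨h ε, h (-1)⟩, fun ⟨hε1, hm1⟩ u ↦ ?_⟩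
  obtain ⟨n, rfl | rfl⟩ := hε u
  · rw [map_zpow, hε1, one_zpow]
  · rw [← neg_one_mul, map_mul, map_zpow, hε1, hm1, one_zpow, one_mul]

section QuadraticField

variable {K : Type} [Field K] [NumberField K] {σ₁ σ₂ : K →+* ℝ}

theorem norm_eq_mul_embeddings_of_finrank_eq_two (hdeg : Module.finrank ℚ K = 2) (hσ : σ₁ ≠ σ₂)
    (x : K) : ((Algebra.norm ℚ x : ℚ) : ℝ) = σ₁ x * σ₂ x := by
  let τ₁ : K →ₐ[ℚ] ℂ := (Complex.ofRealHom.comp σ₁).toRatAlgHom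
  let τ₂ : K →ₐ[ℚ] ℂ := (Complex.ofRealHom.comp σ₂).toRatAlgHom
  have hτ : τ₁ ≠ τ₂ := fun h ↦ hσ <| RingHom.ext fun y ↦
    Complex.ofReal_injective (congrArg (fun f : K →ₐ[ℚ] ℂ ↦ f y) h)
  have huniv : (Finset.univ : Finset (K →ₐ[ℚ] ℂ)) = {τ₁, τ₂} := by
    refine (Finset.eq_of_subset_of_card_le (Finset.subset_univ _) ?_).symm
    rw [Finset.card_univ, AlgHom.card, hdeg, Finset.card_pair hτ]
  apply Complex.ofReal_injective
  have := Algebra.norm_eq_prod_embeddings ℚ ℂ x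
  rw [huniv, Finset.prod_pair hτ] at this
  simpa [τ₁, τ₂] using this

theorem abs_mul_embeddings_of_unit (hdeg : Module.finrank ℚ K = 2) (hσ : σ₁ ≠ σ₂)
    (u : (𝓞 K)ˣ) : |σ₁ (u : K) * σ₂ (u : K)| = 1 := by
  rw [← norm_eq_mul_embeddings_of_finrank_eq_two hdeg hσ, ← RingOfIntegers.coe_norm]
  exact_mod_cast NumberField.isUnit_iff_norm.mp u.isUnit

theorem abs_div_embeddings_of_unit (hdeg : Module.finrank ℚ K = 2) (hσ : σ₁ ≠ σ₂)
    (u : (𝓞 K)ˣ) : |σ₁ (u : K) / σ₂ (u : K)| = σ₁ (u : K) ^ 2 := by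
  have h := abs_mul_embeddings_of_unit hdeg hσ u
  have h₂ : σ₂ (u : K) ≠ 0 := by rintro h₂; simp [h₂] at h
  rw [abs_mul] at h
  rw [abs_div, ← sq_abs, div_eq_iff (abs_ne_zero.mpr h₂), sq, mul_assoc, h, mul_one]

end QuadraticField

section UnitCharacter

variable {K : Type} [Field K] [NumberField K] {𝔮 : Ideal (𝓞 K)} (χ : MulChar (𝓞 K ⧸ 𝔮) ℂ)
  {σ₁ σ₂ : K →+* ℝ} (v : ℝ) (u₁ u₂ : ℕ)

theorem chiInf_mul {α β : K} (hα : α ≠ 0) (hβ : β ≠ 0) :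
    ChiInf K σ₁ σ₂ v u₁ u₂ (α * β) = ChiInf K σ₁ σ₂ v u₁ u₂ α * ChiInf K σ₁ σ₂ v u₁ u₂ β := by
  have h₂α : σ₂ α ≠ 0 := (map_ne_zero σ₂).mpr hα
  have h₂β : σ₂ β ≠ 0 := (map_ne_zero σ₂).mpr hβ
  have hratio : σ₁ (α * β) / σ₂ (α * β) = σ₁ α / σ₂ α * (σ₁ β / σ₂ β) := by
    rw [map_mul, map_mul]; field_simp
  unfold ChiInf
  rw [hratio, abs_mul, Complex.ofReal_mul,
    Complex.mul_cpow_ofReal_nonneg (abs_nonneg _) (abs_nonneg _), map_mul, map_mul,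
    Real.sign_mul, Real.sign_mul]
  push_cast
  ring

variable (σ₁ σ₂) in
def chiChiInfHom : (𝓞 K)ˣ →* ℂ where
  toFun u := χ (Ideal.Quotient.mk 𝔮 u) * ChiInf K σ₁ σ₂ v u₁ u₂ u
  map_one' := by simp [ChiInf]
  map_mul' u w := by
    have hK (x : (𝓞 K)ˣ) : ((x : 𝓞 K) : K) ≠ 0 := RingOfIntegers.coe_ne_zero_iff.mpr x.ne_zero
    simp only [Units.val_mul, map_mul, chiInf_mul v u₁ u₂ (hK u) (hK w)]
    ring

theorem chiChiInfHom_neg_one :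
    chiChiInfHom χ σ₁ σ₂ v u₁ u₂ (-1) = χ (Ideal.Quotient.mk 𝔮 (-1)) * (-1) ^ u₁ * (-1) ^ u₂ := by
  simp [chiChiInfHom, ChiInf, Real.sign_neg, mul_assoc]

theorem chiChiInfHom_apply_of_pos [Finite (𝓞 K ⧸ 𝔮)] (hdeg : Module.finrank ℚ K = 2)
    (hσ : σ₁ ≠ σ₂) (ε : (𝓞 K)ˣ) (hε : 0 < σ₁ (ε : K)) :
    chiChiInfHom χ σ₁ σ₂ v u₁ u₂ ε =
      Complex.exp (((χ (Ideal.Quotient.mk 𝔮 ε)).arg + 2 * v * Real.log (σ₁ (ε : K)) +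
        Real.pi * if Real.sign (σ₂ (ε : K)) ^ u₂ = 1 then 0 else 1 : ℝ) * Complex.I) := by
  set θ := (χ (Ideal.Quotient.mk 𝔮 ε)).arg
  have hχ : χ (Ideal.Quotient.mk 𝔮 ε) = Complex.exp (θ * Complex.I) := by
    conv_lhs => rw [← Complex.norm_mul_exp_arg_mul_I (χ _)]
    rw [χ.norm_apply_eq_one_of_isUnit (ε.isUnit.map _), Complex.ofReal_one, one_mul]
  have hratio : ((|σ₁ (ε : K) / σ₂ (ε : K)| : ℝ) : ℂ) ^ (Complex.I * v) =
      Complex.exp ((2 * v * Real.log (σ₁ (ε : K)) : ℝ) * Complex.I) := by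
    rw [abs_div_embeddings_of_unit hdeg hσ, Complex.cpow_def_of_ne_zero (by simp [hε.ne']),
      ← Complex.ofReal_log (sq_nonneg _), Real.log_pow]
    push_cast
    ring_nf
  have hsign : Real.sign (σ₂ (ε : K)) ^ u₂ = 1 ∨ Real.sign (σ₂ (ε : K)) ^ u₂ = -1 := by
    have hε₂ : σ₂ (ε : K) ≠ 0 :=
      (map_ne_zero σ₂).mpr (RingOfIntegers.coe_ne_zero_iff.mpr ε.ne_zero)
    rcases Real.sign_apply_eq_of_ne_zero _ hε₂ with h | h <;> rw [h]
    · exact neg_one_pow_eq_or ℝ u₂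
    · simp
  have hsign' := Complex.ofReal_eq_exp_of_eq_one_or_neg_one hsign
  push_cast at hsign'
  show χ _ * ChiInf K σ₁ σ₂ v u₁ u₂ _ = _
  rw [ChiInf, hχ, hratio, Real.sign_of_pos hε, hsign', Complex.ofReal_one, one_pow, mul_one,
    ← Complex.exp_add, ← Complex.exp_add]
  push_cast
  ring_nf

end UnitCharacter

theorem statement13_general
    (K : Type) [Field K] [NumberField K]
    (hdeg : Module.finrank ℚ K = 2)
    (σ₁ σ₂ : K →+* ℝ) (hσ : σ₁ ≠ σ₂)
    (ε : (𝓞 K)ˣ) (hε1 : 1 < σ₁ ((ε : 𝓞 K) : K))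
    (hεfund : ∀ u : (𝓞 K)ˣ, ∃ n : ℤ, u = ε ^ n ∨ u = -ε ^ n)
    (𝔮 : Ideal (𝓞 K)) (h𝔮 : 𝔮 ≠ ⊥)
    (χ : MulChar ((𝓞 K) ⧸ 𝔮) ℂ) (v : ℝ) (u₁ u₂ : ℕ) (hu₁ : u₁ ≤ 1) (hu₂ : u₂ ≤ 1)
    (g : ℝ) (hg : g = if (Real.sign (σ₂ ((ε : 𝓞 K) : K))) ^ u₂ = 1 then 0 else 1)
    (ρ : ℝ)
    (hρ : ρ = g / 2 - (χ (Ideal.Quotient.mk 𝔮 ((ε : 𝓞 K)))).arg / (2 * Real.pi)) :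
    (∀ u : (𝓞 K)ˣ,
        χ (Ideal.Quotient.mk 𝔮 ((u : 𝓞 K))) *
          ChiInf K σ₁ σ₂ v u₁ u₂ ((u : 𝓞 K) : K) = 1) ↔
      ((∃ n : ℤ, v = Real.pi * ((n : ℝ) + ρ) / Real.log (σ₁ ((ε : 𝓞 K) : K))) ∧
        (χ (Ideal.Quotient.mk 𝔮 (-1)) = 1 → u₁ = u₂) ∧
        (χ (Ideal.Quotient.mk 𝔮 (-1)) = -1 → u₁ ≠ u₂)) := by
  have : Finite (𝓞 K ⧸ 𝔮) := Ideal.finiteQuotientOfFreeOfNeBot 𝔮 h𝔮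
  obtain ⟨k, hk⟩ : ∃ k : ℤ, g = k :=
    ⟨if Real.sign (σ₂ (ε : K)) ^ u₂ = 1 then 0 else 1, by rw [hg]; split_ifs <;> simp⟩
  change (∀ u, chiChiInfHom χ σ₁ σ₂ v u₁ u₂ u = 1) ↔ _
  rw [MonoidHom.forall_eq_one_iff_of_forall_eq_zpow_or_neg_zpow hεfund,
    chiChiInfHom_apply_of_pos χ v u₁ u₂ hdeg hσ ε (one_pos.trans hε1), ← hg, hk,
    Complex.exp_ofReal_mul_I_eq_one_iff, exists_int_eq_mul_two_pi_iff (Real.log_pos hε1).ne',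
    ← hk, ← hρ, chiChiInfHom_neg_one, map_neg, map_one,
    mul_neg_one_pow_mul_neg_one_pow_eq_one_iff χ.apply_neg_one_eq_one_or_neg_one hu₁ hu₂]

/-- Characterisation of the admissible infinite parts: `χ·χ_∞` is
trivial on units iff `v = π(n+ρ)/log ε` for some `n ∈ ℤ` and the parity condition on
`u₁, u₂` dictated by `χ(-1)` holds. -/
theorem statement13
    (K : Type) [Field K] [NumberField K]
    (d : ℤ) (hd1 : 1 < d) (hdsf : Squarefree d)
    (hdeg : Module.finrank ℚ K = 2) (hθ : ∃ θ : K, θ ^ 2 = (d : K))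
    (σ₁ σ₂ : K →+* ℝ) (hσ : σ₁ ≠ σ₂)
    (ε : (𝓞 K)ˣ) (hε1 : 1 < σ₁ ((ε : 𝓞 K) : K))
    (hεfund : ∀ u : (𝓞 K)ˣ, ∃ n : ℤ, u = ε ^ n ∨ u = -ε ^ n)
    (𝔮 : Ideal (𝓞 K)) (h𝔮 : 𝔮 ≠ ⊥)
    (χ : MulChar ((𝓞 K) ⧸ 𝔮) ℂ) (v : ℝ) (u₁ u₂ : ℕ) (hu₁ : u₁ ≤ 1) (hu₂ : u₂ ≤ 1)
    (g : ℝ) (hg : g = if (Real.sign (σ₂ ((ε : 𝓞 K) : K))) ^ u₂ = 1 then 0 else 1)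
    (ρ : ℝ)
    (hρ : ρ = g / 2 - (χ (Ideal.Quotient.mk 𝔮 ((ε : 𝓞 K)))).arg / (2 * Real.pi)) :
    (∀ u : (𝓞 K)ˣ,
        χ (Ideal.Quotient.mk 𝔮 ((u : 𝓞 K))) *
          ChiInf K σ₁ σ₂ v u₁ u₂ ((u : 𝓞 K) : K) = 1) ↔
      ((∃ n : ℤ, v = Real.pi * ((n : ℝ) + ρ) / Real.log (σ₁ ((ε : 𝓞 K) : K))) ∧
        (χ (Ideal.Quotient.mk 𝔮 (-1)) = 1 → u₁ = u₂) ∧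
        (χ (Ideal.Quotient.mk 𝔮 (-1)) = -1 → u₁ ≠ u₂)) :=
  statement13_general K hdeg σ₁ σ₂ hσ ε hε1 hεfund 𝔮 h𝔮 χ v u₁ u₂ hu₁ hu₂ g hg ρ hρ
end
end

section
/- Assume d ≡ 2 or 3 (mod 4). There exists a constant c > 0, depending only on K, such that for every real H ≥ 1 and all s₁, s₂ ∈ 𝒪_K satisfying, for i = 1, 2: ε^{−1}|σ₂(sᵢ)| < |σ₁(sᵢ)| ≤ ε|σ₂(sᵢ)|, σ₁(sᵢ)/σ₂(sᵢ) > 0, and H < 𝒩(sᵢ) ≤ 2H, the following holds: if W(s₁) ≠ W(s₂), then |W(s₁) − W(s₂)| ≥ c/H. -/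
open NumberField Ideal

noncomputable section

/-- The absolute norm of an element of `𝒪_K`. -/
def elemNorm (K : Type) [Field K] [NumberField K] (a : 𝓞 K) : ℕ :=
  Ideal.absNorm (Ideal.span {a})

/-- `W(s) = log|σ₁(s)/σ₂(s)| / (2 log ε)`, with `e = σ₁(ε)`. -/
def Wfun (K : Type) [Field K] [NumberField K] (σ₁ σ₂ : K →+* ℝ) (e : ℝ) (s : 𝓞 K) : ℝ :=
  Real.log |σ₁ (s : K) / σ₂ (s : K)| / (2 * Real.log e)

/-- The two real embeddings give the trace and norm of any element. -/
lemma trace_norm_embed (K : Type) [Field K] [NumberField K]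
    (hdeg : Module.finrank ℚ K = 2) (σ₁ σ₂ : K →+* ℝ) (hσ : σ₁ ≠ σ₂) (x : K) :
    ((Algebra.trace ℚ K x : ℚ) : ℝ) = σ₁ x + σ₂ x ∧
    ((Algebra.norm ℚ x : ℚ) : ℝ) = σ₁ x * σ₂ x := by
  classical
  set ι₁ : K →ₐ[ℚ] ℂ := (Complex.ofRealHom.comp σ₁).toRatAlgHom with hι₁
  set ι₂ : K →ₐ[ℚ] ℂ := (Complex.ofRealHom.comp σ₂).toRatAlgHom with hι₂
  have hne : ι₁ ≠ ι₂ := by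
    intro h
    apply hσ
    ext y
    have := congrArg (fun f => (f y : ℂ)) h
    simpa [ι₁, ι₂, RingHom.toRatAlgHom] using this
  have hcard : Fintype.card (K →ₐ[ℚ] ℂ) = 2 := by
    rw [AlgHom.card]; exact hdeg
  have huniv : (Finset.univ : Finset (K →ₐ[ℚ] ℂ)) = {ι₁, ι₂} := by
    symm
    apply Finset.eq_univ_of_card
    rw [Finset.card_pair hne, hcard]
  constructor
  · have h := trace_eq_sum_embeddings (E := ℂ) (K := ℚ) (L := K) (x := x)
    rw [huniv, Finset.sum_pair hne] at h
    have : ((Algebra.trace ℚ K x : ℚ) : ℂ) = ((σ₁ x + σ₂ x : ℝ) : ℂ) := by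
      rw [show ((Algebra.trace ℚ K x : ℚ) : ℂ) = algebraMap ℚ ℂ (Algebra.trace ℚ K x) by
        norm_num, h]
      simp [ι₁, ι₂, RingHom.toRatAlgHom]
    exact_mod_cast this
  · have h := Algebra.norm_eq_prod_embeddings ℚ ℂ (x := x)
    rw [huniv, Finset.prod_pair hne] at h
    have : ((Algebra.norm ℚ x : ℚ) : ℂ) = ((σ₁ x * σ₂ x : ℝ) : ℂ) := by
      rw [show ((Algebra.norm ℚ x : ℚ) : ℂ) = algebraMap ℚ ℂ (Algebra.norm ℚ x) by
        norm_num, h]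
      simp [ι₁, ι₂, RingHom.toRatAlgHom]
    exact_mod_cast this

/-- For an algebraic integer, trace and norm are rational integers. -/
lemma exists_int_trace_norm (K : Type) [Field K] [NumberField K]
    (hdeg : Module.finrank ℚ K = 2) (σ₁ σ₂ : K →+* ℝ) (hσ : σ₁ ≠ σ₂) (s : 𝓞 K) :
    (∃ t : ℤ, (t : ℝ) = σ₁ (s : K) + σ₂ (s : K)) ∧
    (∃ n : ℤ, (n : ℝ) = σ₁ (s : K) * σ₂ (s : K)) := by
  have hint : IsIntegral ℤ ((s : K)) := NumberField.RingOfIntegers.isIntegral_coe s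
  obtain ⟨htr, hnm⟩ := trace_norm_embed K hdeg σ₁ σ₂ hσ (s : K)
  constructor
  · have hti : IsIntegral ℤ (Algebra.trace ℚ K (s : K)) := Algebra.isIntegral_trace hint
    obtain ⟨t, ht⟩ := IsIntegrallyClosed.isIntegral_iff.mp hti
    refine ⟨t, ?_⟩
    rw [← htr, ← ht, eq_intCast (algebraMap ℤ ℚ)]
    norm_cast
  · have hni : IsIntegral ℤ (Algebra.norm ℚ (s : K)) := Algebra.isIntegral_norm ℚ hint
    obtain ⟨n, hn⟩ := IsIntegrallyClosed.isIntegral_iff.mp hni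
    refine ⟨n, ?_⟩
    rw [← hnm, ← hn, eq_intCast (algebraMap ℤ ℚ)]
    norm_cast

/-- The elementwise norm is the absolute value of the product of the two embeddings. -/
lemma elemNorm_eq (K : Type) [Field K] [NumberField K]
    (hdeg : Module.finrank ℚ K = 2) (σ₁ σ₂ : K →+* ℝ) (hσ : σ₁ ≠ σ₂) (s : 𝓞 K) :
    (elemNorm K s : ℝ) = |σ₁ (s : K) * σ₂ (s : K)| := by
  obtain ⟨-, hnm⟩ := trace_norm_embed K hdeg σ₁ σ₂ hσ (s : K)
  rw [elemNorm, Ideal.absNorm_span_singleton]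
  rw [← hnm]
  have : ((Algebra.norm ℤ s : ℚ) : ℝ) = ((Algebra.norm ℚ (s : K) : ℚ) : ℝ) := by
    rw [Algebra.coe_norm_int]
  rw [← this]
  push_cast [Nat.cast_natAbs]
  norm_num

/-- Square bound. -/
lemma aux_sq_le (a b e H : ℝ) (ha : 0 ≤ a) (he : 0 ≤ e)
    (h1 : a ≤ e * b) (h2 : a * b ≤ 2 * H) : a ^ 2 ≤ 2 * e * H := by
  nlinarith [mul_le_mul_of_nonneg_right h1 ha, mul_le_mul_of_nonneg_left h2 he]

/-- `r - 1 ≤ r * log r` style bound. -/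
lemma aux_rg (r g : ℝ) (hr0 : 0 < r) (h : 1 - r⁻¹ ≤ g) : r - 1 ≤ r * g := by
  have h2 := mul_le_mul_of_nonneg_left h hr0.le
  have h3 : r * (1 - r⁻¹) = r - 1 := by field_simp
  linarith

/-- monotonicity of `1/x`. -/
lemma aux_one_div (e H : ℝ) (he : 1 ≤ e) (hH : 0 < H) :
    1 / (2 * e ^ 3 * H) ≤ 1 / (2 * e * H) := by
  have he0 : (0:ℝ) ≤ e := by linarith
  have h2 : 1 ≤ e ^ 2 := by nlinarith
  have h3 : e ≤ e ^ 3 := by nlinarith [mul_le_mul_of_nonneg_left h2 he0]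
  have h : 2 * e * H ≤ 2 * e ^ 3 * H := by
    nlinarith [mul_le_mul_of_nonneg_right h3 hH.le]
  have h0 : 0 < 2 * e * H := by positivity
  exact one_div_le_one_div_of_le h0 h

/-- `1 ≤ x ^ 2` implies `1 ≤ |x|`. -/
lemma one_le_abs_of_one_le_sq (x : ℝ) (h : 1 ≤ x ^ 2) : 1 ≤ |x| := by
  nlinarith [abs_nonneg x, sq_abs x]

/-- Product bound used below. -/
lemma mul_le_of_sq_le_sq (a b M : ℝ) (ha : 0 ≤ a) (hb : 0 ≤ b)
    (h1 : a ^ 2 ≤ M) (h2 : b ^ 2 ≤ M) : a * b ≤ M := by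
  nlinarith [sq_nonneg (a - b)]

set_option maxHeartbeats 1000000 in
/-- (Spacing of the values `W(s)`.) -/
theorem statement15
    (K : Type) [Field K] [NumberField K]
    (d : ℤ) (hd1 : 1 < d) (hdsf : Squarefree d) (hd4 : d % 4 = 2 ∨ d % 4 = 3)
    (hdeg : Module.finrank ℚ K = 2) (hθ : ∃ θ : K, θ ^ 2 = (d : K))
    (σ₁ σ₂ : K →+* ℝ) (hσ : σ₁ ≠ σ₂)
    (ε : (𝓞 K)ˣ) (hε1 : 1 < σ₁ ((ε : 𝓞 K) : K))
    (hεfund : ∀ u : (𝓞 K)ˣ, ∃ n : ℤ, u = ε ^ n ∨ u = -ε ^ n) :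
    ∃ c : ℝ, 0 < c ∧ ∀ (H : ℝ), 1 ≤ H → ∀ s₁ s₂ : 𝓞 K,
      ((σ₁ ((ε : 𝓞 K) : K))⁻¹ * |σ₂ (s₁ : K)| < |σ₁ (s₁ : K)| ∧
        |σ₁ (s₁ : K)| ≤ σ₁ ((ε : 𝓞 K) : K) * |σ₂ (s₁ : K)| ∧
        0 < σ₁ (s₁ : K) / σ₂ (s₁ : K) ∧
        H < (elemNorm K s₁ : ℝ) ∧ (elemNorm K s₁ : ℝ) ≤ 2 * H) →
      ((σ₁ ((ε : 𝓞 K) : K))⁻¹ * |σ₂ (s₂ : K)| < |σ₁ (s₂ : K)| ∧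
        |σ₁ (s₂ : K)| ≤ σ₁ ((ε : 𝓞 K) : K) * |σ₂ (s₂ : K)| ∧
        0 < σ₁ (s₂ : K) / σ₂ (s₂ : K) ∧
        H < (elemNorm K s₂ : ℝ) ∧ (elemNorm K s₂ : ℝ) ≤ 2 * H) →
      Wfun K σ₁ σ₂ (σ₁ ((ε : 𝓞 K) : K)) s₁ ≠ Wfun K σ₁ σ₂ (σ₁ ((ε : 𝓞 K) : K)) s₂ →
      c / H ≤ |Wfun K σ₁ σ₂ (σ₁ ((ε : 𝓞 K) : K)) s₁ -
          Wfun K σ₁ σ₂ (σ₁ ((ε : 𝓞 K) : K)) s₂| := by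
  classical
  set e : ℝ := σ₁ ((ε : 𝓞 K) : K) with he_def
  have he : 1 < e := hε1
  have he0 : 0 < e := lt_trans one_pos he
  have hloge : 0 < Real.log e := Real.log_pos he
  refine ⟨1 / (4 * e ^ 3 * Real.log e), by positivity, ?_⟩
  intro H hH s₁ s₂ h1 h2 hW
  have hH0 : (0 : ℝ) < H := lt_of_lt_of_le one_pos hH
  obtain ⟨h1a, h1b, h1c, h1d, h1e⟩ := h1
  obtain ⟨h2a, h2b, h2c, h2d, h2e⟩ := h2
  set x₁ : K := (s₁ : K) with hx₁
  set x₂ : K := (s₂ : K) with hx₂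
  -- nonvanishing
  have hσ2x₁ : σ₂ x₁ ≠ 0 := by
    intro h; rw [h, div_zero] at h1c; exact lt_irrefl 0 h1c
  have hσ1x₁ : σ₁ x₁ ≠ 0 := by
    intro h; rw [h, zero_div] at h1c; exact lt_irrefl 0 h1c
  have hσ2x₂ : σ₂ x₂ ≠ 0 := by
    intro h; rw [h, div_zero] at h2c; exact lt_irrefl 0 h2c
  have hσ1x₂ : σ₁ x₂ ≠ 0 := by
    intro h; rw [h, zero_div] at h2c; exact lt_irrefl 0 h2c
  -- norms
  have hN₁ : (elemNorm K s₁ : ℝ) = |σ₁ x₁ * σ₂ x₁| := elemNorm_eq K hdeg σ₁ σ₂ hσ s₁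
  have hN₂ : (elemNorm K s₂ : ℝ) = |σ₁ x₂ * σ₂ x₂| := elemNorm_eq K hdeg σ₁ σ₂ hσ s₂
  rw [hN₁] at h1d h1e
  rw [hN₂] at h2d h2e
  -- integer trace/norm data
  obtain ⟨⟨t₁, ht₁⟩, -⟩ := exists_int_trace_norm K hdeg σ₁ σ₂ hσ s₁
  obtain ⟨⟨t₂, ht₂⟩, -⟩ := exists_int_trace_norm K hdeg σ₁ σ₂ hσ s₂
  obtain ⟨⟨t₃, ht₃⟩, ⟨n₃, hn₃⟩⟩ := exists_int_trace_norm K hdeg σ₁ σ₂ hσ (s₁ * s₂)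
  have hmul : ((s₁ * s₂ : 𝓞 K) : K) = x₁ * x₂ := by push_cast; ring
  simp only [hmul, _root_.map_mul] at ht₃ hn₃
  set A : ℝ := σ₁ x₁ * σ₂ x₂ with hA
  set B : ℝ := σ₂ x₁ * σ₁ x₂ with hB
  have hB0 : B ≠ 0 := mul_ne_zero hσ2x₁ hσ1x₂
  have hAB_sum : A + B = (t₁ : ℝ) * t₂ - t₃ := by
    rw [ht₁, ht₂, ht₃, hA, hB]; ring
  have hAB_prod : A * B = (n₃ : ℝ) := by
    rw [hn₃, hA, hB]; ring
  -- ratios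
  set ρ₁ : ℝ := σ₁ x₁ / σ₂ x₁ with hρ₁def
  set ρ₂ : ℝ := σ₁ x₂ / σ₂ x₂ with hρ₂def
  have hρ₁ : 0 < ρ₁ := h1c
  have hρ₂ : 0 < ρ₂ := h2c
  set r : ℝ := ρ₁ / ρ₂ with hrdef
  have hr0 : 0 < r := div_pos hρ₁ hρ₂
  have hrAB : r = A / B := by
    rw [hrdef, hρ₁def, hρ₂def, hA, hB]
    field_simp
    try ring
  -- W difference
  have hWd : Wfun K σ₁ σ₂ e s₁ - Wfun K σ₁ σ₂ e s₂ = Real.log r / (2 * Real.log e) := by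
    simp only [Wfun]
    rw [← hx₁, ← hx₂, abs_of_pos h1c, abs_of_pos h2c, div_sub_div_same,
      ← Real.log_div (ne_of_gt hρ₁) (ne_of_gt hρ₂)]
  -- r ≠ 1
  have hr1 : r ≠ 1 := by
    intro h
    apply hW
    have := hWd
    rw [h, Real.log_one, zero_div] at this
    exact sub_eq_zero.mp this
  have hABne : A ≠ B := by
    intro h
    apply hr1
    rw [hrAB, h, div_self hB0]
  -- the integer gap
  have hm : (((t₁ * t₂ - t₃) ^ 2 - 4 * n₃ : ℤ) : ℝ) = (A - B) ^ 2 := by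
    push_cast
    rw [← hAB_sum, ← hAB_prod]
    ring
  have h1le : (1 : ℝ) ≤ |A - B| := by
    have hsq : 0 < (A - B) ^ 2 :=
      lt_of_le_of_ne (sq_nonneg _) (Ne.symm (pow_ne_zero 2 (sub_ne_zero.mpr hABne)))
    have hmpos : (0 : ℤ) < (t₁ * t₂ - t₃) ^ 2 - 4 * n₃ := by
      have : (0 : ℝ) < (((t₁ * t₂ - t₃) ^ 2 - 4 * n₃ : ℤ) : ℝ) := by rw [hm]; exact hsq
      exact_mod_cast this
    have h1m : (1 : ℝ) ≤ (((t₁ * t₂ - t₃) ^ 2 - 4 * n₃ : ℤ) : ℝ) := by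
      exact_mod_cast hmpos
    rw [hm] at h1m
    exact one_le_abs_of_one_le_sq _ h1m
  -- bounds
  have h1a' : |σ₂ x₁| < e * |σ₁ x₁| := by
    have h := mul_lt_mul_of_pos_left h1a he0
    rwa [← mul_assoc, mul_inv_cancel₀ (ne_of_gt he0), one_mul] at h
  have h2a' : |σ₂ x₂| < e * |σ₁ x₂| := by
    have h := mul_lt_mul_of_pos_left h2a he0
    rwa [← mul_assoc, mul_inv_cancel₀ (ne_of_gt he0), one_mul] at h
  have habs₁ : |σ₁ x₁ * σ₂ x₁| = |σ₁ x₁| * |σ₂ x₁| := abs_mul _ _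
  have habs₂ : |σ₁ x₂ * σ₂ x₂| = |σ₁ x₂| * |σ₂ x₂| := abs_mul _ _
  have ha : |σ₂ x₁| ^ 2 ≤ 2 * e * H := by
    rw [habs₁] at h1e
    exact aux_sq_le _ _ _ _ (abs_nonneg _) he0.le (le_of_lt h1a')
      (by rw [mul_comm]; exact h1e)
  have hb : |σ₁ x₂| ^ 2 ≤ 2 * e * H := by
    rw [habs₂] at h2e
    exact aux_sq_le _ _ _ _ (abs_nonneg _) he0.le h2b h2e
  have hBle : |B| ≤ 2 * e * H := by
    rw [hB, abs_mul]
    exact mul_le_of_sq_le_sq _ _ _ (abs_nonneg _) (abs_nonneg _) ha hb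
  have hBpos : 0 < |B| := abs_pos.mpr hB0
  -- upper bound for r
  have hρ₁e : ρ₁ ≤ e := by
    have : ρ₁ = |σ₁ x₁| / |σ₂ x₁| := by
      rw [hρ₁def, ← abs_div, abs_of_pos h1c]
    rw [this, div_le_iff₀ (abs_pos.mpr hσ2x₁)]
    exact h1b
  have hρ₂e : e⁻¹ < ρ₂ := by
    have : ρ₂ = |σ₁ x₂| / |σ₂ x₂| := by
      rw [hρ₂def, ← abs_div, abs_of_pos h2c]
    rw [this, lt_div_iff₀ (abs_pos.mpr hσ2x₂)]
    exact h2a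
  have hrub : r ≤ e ^ 2 := by
    have hinv : 0 < e⁻¹ := inv_pos.mpr he0
    have := div_le_div₀ (le_of_lt he0) hρ₁e hinv (le_of_lt hρ₂e)
    calc r ≤ e / e⁻¹ := this
      _ = e ^ 2 := by field_simp
  -- gap for r
  have hgap : 1 / (2 * e * H) ≤ |r - 1| := by
    have : |r - 1| = |A - B| / |B| := by
      rw [hrAB, div_sub_one hB0, abs_div]
    rw [this]
    exact div_le_div₀ (abs_nonneg _) h1le hBpos hBle
  -- lower bound on |log r|
  have hlog : 1 / (2 * e ^ 3 * H) ≤ |Real.log r| := by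
    rcases le_or_gt 1 r with hr | hr
    · -- r ≥ 1
      have hg0 : 0 ≤ Real.log r := Real.log_nonneg hr
      rw [abs_of_nonneg hg0]
      have hinv := Real.log_le_sub_one_of_pos (inv_pos.mpr hr0)
      rw [Real.log_inv] at hinv
      have hrg : r - 1 ≤ r * Real.log r :=
        aux_rg r (Real.log r) hr0 (by linarith only [hinv])
      have hgap' : 1 ≤ (r - 1) * (2 * e * H) := by
        have habs : |r - 1| = r - 1 := abs_of_nonneg (by linarith)
        rw [habs] at hgap
        rw [div_le_iff₀ (by positivity)] at hgap
        linarith only [hgap]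
      rw [div_le_iff₀ (by positivity)]
      calc (1 : ℝ) ≤ (r - 1) * (2 * e * H) := hgap'
        _ ≤ (r * Real.log r) * (2 * e * H) :=
            mul_le_mul_of_nonneg_right hrg (by positivity)
        _ ≤ (e ^ 2 * Real.log r) * (2 * e * H) :=
            mul_le_mul_of_nonneg_right (mul_le_mul_of_nonneg_right hrub hg0)
              (by positivity)
        _ = Real.log r * (2 * e ^ 3 * H) := by ring
    · -- r < 1
      have hgneg : Real.log r < 0 := Real.log_neg hr0 hr
      rw [abs_of_neg hgneg]
      have hlr : Real.log r ≤ r - 1 := Real.log_le_sub_one_of_pos hr0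
      have habs : |r - 1| = 1 - r := by
        rw [abs_sub_comm, abs_of_nonneg (by linarith)]
      rw [habs] at hgap
      have h13 : 1 / (2 * e ^ 3 * H) ≤ 1 / (2 * e * H) := aux_one_div e H he.le hH0
      linarith only [h13, hgap, hlr]
  -- conclusion
  rw [hWd, abs_div, abs_of_pos (by positivity : (0:ℝ) < 2 * Real.log e)]
  calc (1 / (4 * e ^ 3 * Real.log e)) / H
      = (1 / (2 * e ^ 3 * H)) / (2 * Real.log e) := by
        field_simp
        ring
    _ ≤ |Real.log r| / (2 * Real.log e) := by gcongr

end
end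

section
/- Assume d ≡ 2 or 3 (mod 4). For every δ > 0 there exists a constant C > 0, depending only on K and δ, such that for every real H ≥ 1 and every nonzero s₂ ∈ 𝒪_K with H < 𝒩(s₂) ≤ 2H, the number of elements s₁ ∈ 𝒪_K with H < 𝒩(s₁) ≤ 2H and s₁/s₂ ∈ ℚ is at most C·H^{1/2+δ}. -/
open NumberField Ideal

noncomputable section

namespace St16

variable {K : Type} [Field K] [NumberField K]

lemma elemNorm_mul (a b : 𝓞 K) : elemNorm K (a * b) = elemNorm K a * elemNorm K b := by
  unfold elemNorm
  rw [← Ideal.span_singleton_mul_span_singleton]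
  exact MonoidHom.map_mul Ideal.absNorm.toMonoidHom _ _

lemma elemNorm_pos {a : 𝓞 K} (ha : a ≠ 0) : 0 < elemNorm K a := by
  rw [Nat.pos_iff_ne_zero]
  intro h
  unfold elemNorm at h
  rw [Ideal.absNorm_eq_zero_iff, Ideal.span_singleton_eq_bot] at h
  exact ha h

lemma elemNorm_intCast (hdeg : Module.finrank ℚ K = 2) (z : ℤ) :
    elemNorm K (z : 𝓞 K) = z.natAbs ^ 2 := by
  unfold elemNorm
  rw [Ideal.absNorm_span_singleton]
  have h1 : ((z : ℤ) : 𝓞 K) = algebraMap ℤ (𝓞 K) z := by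
    simp [algebraMap_int_eq, eq_intCast]
  rw [h1, Algebra.norm_algebraMap_of_basis (NumberField.RingOfIntegers.basis K)]
  have h2 : Fintype.card (Module.Free.ChooseBasisIndex ℤ (𝓞 K)) = 2 := by
    rw [← Module.finrank_eq_card_chooseBasisIndex, NumberField.RingOfIntegers.rank, hdeg]
  rw [h2, Int.natAbs_pow]

lemma elemNorm_natCast (hdeg : Module.finrank ℚ K = 2) (n : ℕ) :
    elemNorm K (n : 𝓞 K) = n ^ 2 := by
  have := elemNorm_intCast (K := K) hdeg (n : ℤ)
  simpa using this

lemma sq_le_elemNorm (hdeg : Module.finrank ℚ K = 2) {s : 𝓞 K} (hs : s ≠ 0) {b : ℕ}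
    (h : (b : 𝓞 K) ∣ s) : b ^ 2 ≤ elemNorm K s := by
  obtain ⟨t, rfl⟩ := h
  have ht : t ≠ 0 := by rintro rfl; simp at hs
  rw [elemNorm_mul, elemNorm_natCast hdeg]
  exact Nat.le_mul_of_pos_right _ (elemNorm_pos ht)

lemma lcm_cast_dvd {R : Type*} [CommRing R] [IsDomain R] [CharZero R] {s : R} {b₁ b₂ : ℕ}
    (hb₁ : b₁ ≠ 0) (h1 : (b₁ : R) ∣ s) (h2 : (b₂ : R) ∣ s) :
    ((Nat.lcm b₁ b₂ : ℕ) : R) ∣ s := by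
  obtain ⟨t₁, e1⟩ := h1
  obtain ⟨t₂, e2⟩ := h2
  set g := Nat.gcd b₁ b₂ with hg
  set l := Nat.lcm b₁ b₂ with hl
  have hgl : (g : R) * l = (b₁ : R) * b₂ := by exact_mod_cast congrArg (Nat.cast : ℕ → R) (Nat.gcd_mul_lcm b₁ b₂)
  have hgR : (g : R) = (b₁ : R) * ((Nat.gcdA b₁ b₂ : ℤ) : R) + (b₂ : R) * ((Nat.gcdB b₁ b₂ : ℤ) : R) := by
    have := Nat.gcd_eq_gcd_ab b₁ b₂
    exact_mod_cast congrArg (Int.cast : ℤ → R) this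
  have hgne : (g : R) ≠ 0 := by
    exact_mod_cast Nat.cast_ne_zero.mpr (Nat.gcd_ne_zero_left hb₁)
  refine ⟨((Nat.gcdA b₁ b₂ : ℤ) : R) * t₂ + ((Nat.gcdB b₁ b₂ : ℤ) : R) * t₁, ?_⟩
  apply mul_left_cancel₀ hgne
  linear_combination s * hgR - (((Nat.gcdA b₁ b₂ : ℤ) : R) * t₂ + ((Nat.gcdB b₁ b₂ : ℤ) : R) * t₁) * hgl + (b₁ : R) * ((Nat.gcdA b₁ b₂ : ℤ) : R) * e2 + (b₂ : R) * ((Nat.gcdB b₁ b₂ : ℤ) : R) * e1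


end St16

/-- The number of `s₁` with `H < 𝒩(s₁) ≤ 2H` and `s₁/s₂ ∈ ℚ`
is `O_δ(H^{1/2+δ})`. -/

theorem statement16
    (K : Type) [Field K] [NumberField K]
    (d : ℤ) (hd1 : 1 < d) (hdsf : Squarefree d) (hd4 : d % 4 = 2 ∨ d % 4 = 3)
    (hdeg : Module.finrank ℚ K = 2) (hθ : ∃ θ : K, θ ^ 2 = (d : K))
    (δ : ℝ) (hδ : 0 < δ) :
    ∃ C : ℝ, 0 < C ∧ ∀ (H : ℝ), 1 ≤ H → ∀ s₂ : 𝓞 K, s₂ ≠ 0 →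
      H < (elemNorm K s₂ : ℝ) → (elemNorm K s₂ : ℝ) ≤ 2 * H →
      (Nat.card {s₁ : 𝓞 K // H < (elemNorm K s₁ : ℝ) ∧ (elemNorm K s₁ : ℝ) ≤ 2 * H ∧
          ∃ q : ℚ, (s₁ : K) / (s₂ : K) = (q : K)} : ℝ) ≤
        C * H ^ ((1 : ℝ) / 2 + δ) := by
  classical
  refine ⟨5, by norm_num, ?_⟩
  intro H hH s₂ hs₂ hlow hhigh
  have hH0 : (0:ℝ) < H := by linarith
  have hs₂K : (algebraMap (𝓞 K) K) s₂ ≠ 0 := RingOfIntegers.coe_ne_zero_iff.mpr hs₂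
  set B := elemNorm K s₂ with hB
  have hB1 : 1 ≤ B := by
    have h1 : (1:ℝ) ≤ (B:ℝ) := le_of_lt (lt_of_le_of_lt hH hlow)
    exact_mod_cast h1
  set P : ℕ → Prop := fun b => 0 < b ∧ (b : 𝓞 K) ∣ s₂ with hPdef
  set m : ℕ := Nat.findGreatest P B with hm
  have hP1 : P 1 := ⟨one_pos, by simp⟩
  have hmP : P m := Nat.findGreatest_spec hB1 hP1
  have hm0 : m ≠ 0 := hmP.1.ne'
  have hmB : m ^ 2 ≤ B := St16.sq_le_elemNorm hdeg hs₂ hmP.2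
  have hmax : ∀ b : ℕ, P b → b ∣ m := by
    intro b hb
    have hl : P (Nat.lcm b m) :=
      ⟨Nat.pos_of_ne_zero (Nat.lcm_ne_zero hb.1.ne' hm0),
       St16.lcm_cast_dvd hb.1.ne' hb.2 hmP.2⟩
    have hlB : Nat.lcm b m ≤ B :=
      le_trans (Nat.le_self_pow two_ne_zero _) (St16.sq_le_elemNorm hdeg hs₂ hl.2)
    have h1 : Nat.lcm b m ≤ m := Nat.le_findGreatest hlB hl
    have h2 : m ≤ Nat.lcm b m := Nat.le_of_dvd hl.1 (Nat.dvd_lcm_right b m)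
    have h3 : Nat.lcm b m = m := le_antisymm h1 h2
    exact h3 ▸ Nat.dvd_lcm_left b m
  have hmR : (m : ℝ) ≤ Real.sqrt (2 * H) := by
    have h1 : ((m:ℝ)) ^ 2 ≤ 2 * H := by
      have h2 : ((m^2 : ℕ) : ℝ) ≤ (B : ℝ) := Nat.cast_le.mpr hmB
      push_cast at h2
      linarith
    calc (m:ℝ) = Real.sqrt ((m:ℝ)^2) := (Real.sqrt_sq (by positivity)).symm
      _ ≤ Real.sqrt (2*H) := Real.sqrt_le_sqrt h1
  have key : ∀ x : {s₁ : 𝓞 K // H < (elemNorm K s₁ : ℝ) ∧ (elemNorm K s₁ : ℝ) ≤ 2 * H ∧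
        ∃ q : ℚ, (s₁ : K) / (s₂ : K) = (q : K)},
      ∃ q : ℚ, ((x.1 : 𝓞 K) : K) = (q : K) * ((s₂ : 𝓞 K) : K) ∧ q.den ∣ m ∧
        (q.num.natAbs : ℝ) ≤ Real.sqrt 2 * q.den := by
    rintro ⟨s₁, h1, h2, q, hq⟩
    have heq : (s₁ : K) = (q : K) * (s₂ : K) := by
      rw [div_eq_iff hs₂K] at hq
      exact hq
    have hq0 : q ≠ 0 := by
      rintro rfl
      simp only [Rat.cast_zero, zero_mul] at heq
      have hs₁0 : s₁ = 0 := by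
        have := RingOfIntegers.coe_eq_zero_iff.mp heq
        exact this
      rw [hs₁0] at h1
      have : elemNorm K (0 : 𝓞 K) = 0 := by
        unfold elemNorm; simp
      rw [this] at h1
      push_cast at h1
      linarith
    have hdenK : ((q.den : ℕ) : K) ≠ 0 := by
      exact_mod_cast Nat.cast_ne_zero.mpr q.den_nz
    have E : ((q.den : ℕ) : 𝓞 K) * s₁ = ((q.num : ℤ) : 𝓞 K) * s₂ := by
      refine RingOfIntegers.ext ?_
      have heq' : algebraMap (𝓞 K) K s₁ = (q : K) * algebraMap (𝓞 K) K s₂ := heq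
      show algebraMap (𝓞 K) K (((q.den : ℕ) : 𝓞 K) * s₁) =
        algebraMap (𝓞 K) K (((q.num : ℤ) : 𝓞 K) * s₂)
      rw [_root_.map_mul, _root_.map_mul, map_natCast, map_intCast, heq', Rat.cast_def]
      field_simp
    obtain ⟨x, y, hxy⟩ : IsCoprime (q.num) ((q.den : ℕ) : ℤ) := by
      rw [Int.isCoprime_iff_gcd_eq_one]
      exact q.reduced
    have hxyR : (x : 𝓞 K) * ((q.num : ℤ) : 𝓞 K) + (y : 𝓞 K) * ((q.den : ℕ) : 𝓞 K) = 1 := by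
      exact_mod_cast congrArg (Int.cast : ℤ → 𝓞 K) hxy
    have hdvd : ((q.den : ℕ) : 𝓞 K) ∣ s₂ := by
      refine ⟨(x : 𝓞 K) * s₁ + (y : 𝓞 K) * s₂, ?_⟩
      linear_combination (-s₂) * hxyR - (x : 𝓞 K) * E
    have hdm : q.den ∣ m := hmax q.den ⟨q.pos, hdvd⟩
    refine ⟨q, heq, hdm, ?_⟩
    have hnorm : q.den ^ 2 * elemNorm K s₁ = q.num.natAbs ^ 2 * B := by
      have hE := congrArg (elemNorm K) E
      rwa [St16.elemNorm_mul, St16.elemNorm_mul, St16.elemNorm_natCast hdeg,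
        St16.elemNorm_intCast hdeg] at hE
    have hnR : (q.den : ℝ) ^ 2 * (elemNorm K s₁ : ℝ) = (q.num.natAbs : ℝ) ^ 2 * (B : ℝ) := by
      exact_mod_cast congrArg (Nat.cast : ℕ → ℝ) hnorm
    have hR : (q.num.natAbs : ℝ) ^ 2 ≤ 2 * (q.den : ℝ) ^ 2 := by
      have a1 : (q.num.natAbs : ℝ) ^ 2 * H ≤ (q.num.natAbs : ℝ) ^ 2 * (B : ℝ) :=
        mul_le_mul_of_nonneg_left hlow.le (by positivity)
      have a2 : (q.den : ℝ) ^ 2 * (elemNorm K s₁ : ℝ) ≤ (q.den : ℝ) ^ 2 * (2 * H) :=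
        mul_le_mul_of_nonneg_left h2 (by positivity)
      have a3 : (q.num.natAbs : ℝ) ^ 2 * H ≤ 2 * (q.den : ℝ) ^ 2 * H := by nlinarith
      exact le_of_mul_le_mul_right (by linarith) hH0
    calc (q.num.natAbs : ℝ) = Real.sqrt ((q.num.natAbs : ℝ) ^ 2) :=
          (Real.sqrt_sq (by positivity)).symm
      _ ≤ Real.sqrt (2 * (q.den : ℝ) ^ 2) := Real.sqrt_le_sqrt hR
      _ = Real.sqrt 2 * q.den := by
          rw [Real.sqrt_mul (by norm_num), Real.sqrt_sq (by positivity)]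
  set N : ℕ := ⌊2 * Real.sqrt H⌋₊ with hNdef
  have hmQ : ((m : ℚ)) ≠ 0 := Nat.cast_ne_zero.mpr hm0
  -- the integer attached to each s₁
  set F : {s₁ : 𝓞 K // H < (elemNorm K s₁ : ℝ) ∧ (elemNorm K s₁ : ℝ) ≤ 2 * H ∧
      ∃ q : ℚ, (s₁ : K) / (s₂ : K) = (q : K)} → ℤ :=
    fun x => (key x).choose.num * ((m / (key x).choose.den : ℕ) : ℤ) with hFdef
  have hFval : ∀ x, ((F x : ℤ) : ℚ) = ((key x).choose : ℚ) * (m : ℚ) := by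
    intro x
    obtain ⟨-, hdm, -⟩ := (key x).choose_spec
    set q := (key x).choose with hqdef
    have hden : ((q.den : ℚ)) ≠ 0 := by exact_mod_cast q.den_nz
    show (((q.num * ((m / q.den : ℕ) : ℤ)) : ℤ) : ℚ) = (q : ℚ) * m
    rw [Int.cast_mul, Int.cast_natCast, Nat.cast_div hdm hden]
    conv_rhs => rw [← Rat.num_div_den q]
    push_cast
    ring
  have hFabs : ∀ x, |(F x : ℝ)| ≤ 2 * Real.sqrt H := by
    intro x
    obtain ⟨-, hdm, hna⟩ := (key x).choose_spec
    set q := (key x).choose with hqdef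
    have e1 : (F x).natAbs = q.num.natAbs * (m / q.den) := by
      show (q.num * ((m / q.den : ℕ) : ℤ)).natAbs = _
      rw [Int.natAbs_mul, Int.natAbs_natCast]
    have e2 : |(F x : ℝ)| = ((F x).natAbs : ℝ) := by
      rw [Nat.cast_natAbs, Int.cast_abs]
    have e3 : (q.den : ℝ) * ((m / q.den : ℕ) : ℝ) = (m : ℝ) := by
      exact_mod_cast congrArg (Nat.cast : ℕ → ℝ) (Nat.mul_div_cancel' hdm)
    have e4 : ((F x).natAbs : ℝ) ≤ Real.sqrt 2 * m := by
      rw [e1]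
      push_cast
      calc (q.num.natAbs : ℝ) * ((m / q.den : ℕ) : ℝ)
          ≤ (Real.sqrt 2 * q.den) * ((m / q.den : ℕ) : ℝ) :=
            mul_le_mul_of_nonneg_right hna (by positivity)
        _ = Real.sqrt 2 * ((q.den : ℝ) * ((m / q.den : ℕ) : ℝ)) := by ring
        _ = Real.sqrt 2 * m := by rw [e3]
    have e5 : Real.sqrt 2 * (m : ℝ) ≤ Real.sqrt 2 * Real.sqrt (2 * H) :=
      mul_le_mul_of_nonneg_left hmR (Real.sqrt_nonneg 2)
    have e6 : Real.sqrt 2 * Real.sqrt (2 * H) = 2 * Real.sqrt H := by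
      rw [← Real.sqrt_mul (by norm_num : (0:ℝ) ≤ 2)]
      rw [show (2 : ℝ) * (2 * H) = 2 ^ 2 * H by ring]
      rw [Real.sqrt_mul (by positivity), Real.sqrt_sq (by norm_num : (0:ℝ) ≤ 2)]
    rw [e2]
    calc ((F x).natAbs : ℝ) ≤ Real.sqrt 2 * m := e4
      _ ≤ 2 * Real.sqrt H := by rw [← e6]; exact e5
  have hmem : ∀ x, F x ∈ Finset.Icc (-(N : ℤ)) (N : ℤ) := by
    intro x
    have h1' : (F x).natAbs ≤ N := by
      apply Nat.le_floor
      have := hFabs x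
      calc ((F x).natAbs : ℝ) = |(F x : ℝ)| := by rw [Nat.cast_natAbs, Int.cast_abs]
        _ ≤ 2 * Real.sqrt H := this
    have h2' : |F x| ≤ (N : ℤ) := by
      rw [Int.abs_eq_natAbs]
      exact_mod_cast h1'
    rw [Finset.mem_Icc]
    exact ⟨(abs_le.mp h2').1, (abs_le.mp h2').2⟩
  have hinj : Function.Injective F := by
    intro a b hab
    have ha := hFval a
    have hb := hFval b
    rw [hab] at ha
    have hqq : (key a).choose = (key b).choose := by
      have := ha.symm.trans hb
      exact mul_right_cancel₀ hmQ this
    obtain ⟨ea, -, -⟩ := (key a).choose_spec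
    obtain ⟨eb, -, -⟩ := (key b).choose_spec
    apply Subtype.ext
    apply RingOfIntegers.ext
    rw [ea, eb, hqq]
  have hcard : Nat.card {s₁ : 𝓞 K // H < (elemNorm K s₁ : ℝ) ∧ (elemNorm K s₁ : ℝ) ≤ 2 * H ∧
      ∃ q : ℚ, (s₁ : K) / (s₂ : K) = (q : K)} ≤ 2 * N + 1 := by
    have step : Nat.card {s₁ : 𝓞 K // H < (elemNorm K s₁ : ℝ) ∧ (elemNorm K s₁ : ℝ) ≤ 2 * H ∧
        ∃ q : ℚ, (s₁ : K) / (s₂ : K) = (q : K)} ≤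
        Nat.card {n : ℤ // n ∈ Finset.Icc (-(N : ℤ)) (N : ℤ)} := by
      apply Nat.card_le_card_of_injective
        (f := fun x => (⟨F x, hmem x⟩ : {n : ℤ // n ∈ Finset.Icc (-(N : ℤ)) (N : ℤ)}))
      intro a b hab
      exact hinj (congrArg Subtype.val hab)
    refine le_trans step ?_
    rw [Nat.card_eq_finsetCard (Finset.Icc (-(N : ℤ)) (N : ℤ)), Int.card_Icc]
    omega
  have hNle : (N : ℝ) ≤ 2 * Real.sqrt H := Nat.floor_le (by positivity)
  have h1s : (1 : ℝ) ≤ Real.sqrt H := Real.one_le_sqrt.mpr hH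
  have hsq : Real.sqrt H ≤ H ^ ((1 : ℝ) / 2 + δ) := by
    rw [Real.sqrt_eq_rpow]
    exact Real.rpow_le_rpow_of_exponent_le hH (by linarith)
  have hcardR : (Nat.card {s₁ : 𝓞 K // H < (elemNorm K s₁ : ℝ) ∧ (elemNorm K s₁ : ℝ) ≤ 2 * H ∧
      ∃ q : ℚ, (s₁ : K) / (s₂ : K) = (q : K)} : ℝ) ≤ 2 * (N : ℝ) + 1 := by
    exact_mod_cast hcard
  calc (Nat.card {s₁ : 𝓞 K // H < (elemNorm K s₁ : ℝ) ∧ (elemNorm K s₁ : ℝ) ≤ 2 * H ∧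
      ∃ q : ℚ, (s₁ : K) / (s₂ : K) = (q : K)} : ℝ) ≤ 2 * (N : ℝ) + 1 := hcardR
    _ ≤ 5 * Real.sqrt H := by linarith
    _ ≤ 5 * H ^ ((1 : ℝ) / 2 + δ) := by linarith

end
end
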